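/- arXiv:0705.3356 — 10 statements merged into one kernel-verified Lean document; each statement's English description precedes it below -/
import Mathlib

section
/- Let F be a linearly ordered field with integer part I and let α = p/q > 1 where p ∈ I^{≥0}, q ∈ I^{>0}. Then N_α is the union over r ∈ I with 0 ≤ r < q of the arithmetic progressions pI^{≥0} + ⌊pr/q⌋, and the arithmetic progression pI^{≥0} + (p−1) is contained in I^{≥0} \ N_α. -/
/-! Writing `n = q t + r` with `t = ⌊n / q⌋` and `0 ≤ r < q` gives `n (p / q) = p r / q + p t`, and
since `p t ∈ I` the floor shifts by it: `⌊n p / q⌋ = ⌊p r / q⌋ + p t`. If `⌊n p / q⌋ = p t + p - 1`,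
then `q (t + 1) - n` lies in `I` and strictly between `0` and `q / p < 1`, contradicting discreteness. -/

/-- `N_α`: the set `{⌊n·α⌋ : n ∈ I, n ≥ 0}`, where `fl` is the floor function
associated to the integer part `I` of `F`. -/
def Nset {F : Type*} [Field F] [LinearOrder F] [IsStrictOrderedRing F] (I : Subring F) (fl : F → F) (α : F) : Set F :=
  {y | ∃ n, n ∈ I ∧ 0 ≤ n ∧ y = fl (n * α)}

/-- `I^{≥0}`: the nonnegative elements of `I`. -/
def Inonneg {F : Type*} [Field F] [LinearOrder F] [IsStrictOrderedRing F] (I : Subring F) : Set F :=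
  {n | n ∈ I ∧ 0 ≤ n}

/-- The arithmetic progression `m·I^{≥0} + k = {m·t + k : t ∈ I, t ≥ 0}`. -/
def AP {F : Type*} [Field F] [LinearOrder F] [IsStrictOrderedRing F] (I : Subring F) (m k : F) : Set F :=
  {y | ∃ t, t ∈ I ∧ 0 ≤ t ∧ y = m * t + k}

namespace IntegerPart

variable {F : Type*} [Field F] [LinearOrder F] [IsStrictOrderedRing F] {I : Subring F} {fl : F → F}

theorem add_one_le_of_lt (hdisc : ∀ x ∈ I, ¬(0 < x ∧ x < 1)) {a b : F} (ha : a ∈ I) (hb : b ∈ I)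
    (hab : a < b) : a + 1 ≤ b := by
  by_contra! h
  exact hdisc (b - a) (I.sub_mem hb ha) ⟨by linarith, by linarith⟩

theorem eq_of_le_of_lt_add_one (hdisc : ∀ x ∈ I, ¬(0 < x ∧ x < 1)) {a b x : F} (ha : a ∈ I)
    (hb : b ∈ I) (hax : a ≤ x) (hxa : x < a + 1) (hbx : b ≤ x) (hxb : x < b + 1) : a = b := by
  rcases lt_trichotomy a b with h | h | h
  · linarith [add_one_le_of_lt hdisc ha hb h]
  · exact h
  · linarith [add_one_le_of_lt hdisc hb ha h]
theorem fl_add_of_mem (hdisc : ∀ x ∈ I, ¬(0 < x ∧ x < 1))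
    (hfl : ∀ x : F, fl x ∈ I ∧ fl x ≤ x ∧ x < fl x + 1) (x : F) {m : F} (hm : m ∈ I) :
    fl (x + m) = fl x + m := by
  obtain ⟨hI, hle, hlt⟩ := hfl (x + m)
  obtain ⟨hI', hle', hlt'⟩ := hfl x
  exact eq_of_le_of_lt_add_one hdisc hI (I.add_mem hI' hm) hle hlt (by linarith) (by linarith)

theorem fl_nonneg (hdisc : ∀ x ∈ I, ¬(0 < x ∧ x < 1))
    (hfl : ∀ x : F, fl x ∈ I ∧ fl x ≤ x ∧ x < fl x + 1) {x : F} (hx : 0 ≤ x) : 0 ≤ fl x := by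
  obtain ⟨hI, -, hlt⟩ := hfl x
  by_contra! h
  linarith [add_one_le_of_lt hdisc hI I.zero_mem h]

theorem exists_eq_mul_add_of_nonneg (hdisc : ∀ x ∈ I, ¬(0 < x ∧ x < 1))
    (hfl : ∀ x : F, fl x ∈ I ∧ fl x ≤ x ∧ x < fl x + 1) {q n : F} (hq : q ∈ I) (hq0 : 0 < q)
    (hn : n ∈ I) (hn0 : 0 ≤ n) :
    ∃ t, t ∈ I ∧ 0 ≤ t ∧ ∃ r, r ∈ I ∧ 0 ≤ r ∧ r < q ∧ n = q * t + r := by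
  obtain ⟨htI, hle, hlt⟩ := hfl (n / q)
  have hqt : q * fl (n / q) ≤ n := by rwa [le_div_iff₀' hq0] at hle
  have hnq : n < q * fl (n / q) + q := by rwa [div_lt_iff₀' hq0, mul_add_one] at hlt
  exact ⟨fl (n / q), htI, fl_nonneg hdisc hfl (div_nonneg hn0 hq0.le),
    n - q * fl (n / q), I.sub_mem hn (I.mul_mem hq htI), by linarith, by linarith, by ring⟩

theorem fl_mul_add_mul_div (hdisc : ∀ x ∈ I, ¬(0 < x ∧ x < 1))
    (hfl : ∀ x : F, fl x ∈ I ∧ fl x ≤ x ∧ x < fl x + 1) {p q t : F} (hp : p ∈ I) (hq : q ≠ 0)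
    (ht : t ∈ I) (r : F) : fl ((q * t + r) * (p / q)) = fl (p * r / q) + p * t := by
  rw [← fl_add_of_mem hdisc hfl _ (I.mul_mem hp ht)]
  congr 1
  field_simp
  ring

theorem Nset_div_eq_setOf_AP (hdisc : ∀ x ∈ I, ¬(0 < x ∧ x < 1))
    (hfl : ∀ x : F, fl x ∈ I ∧ fl x ≤ x ∧ x < fl x + 1) {p q : F} (hp : p ∈ I) (hq : q ∈ I)
    (hq0 : 0 < q) :
    Nset I fl (p / q) = {y | ∃ r, r ∈ I ∧ 0 ≤ r ∧ r < q ∧ y ∈ AP I p (fl (p * r / q))} := by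
  ext y
  simp only [Nset, AP, Set.mem_ofPred_eq]
  constructor
  · rintro ⟨n, hn, hn0, rfl⟩
    obtain ⟨t, ht, ht0, r, hr, hr0, hrq, rfl⟩ := exists_eq_mul_add_of_nonneg hdisc hfl hq hq0 hn hn0
    exact ⟨r, hr, hr0, hrq, t, ht, ht0, by rw [fl_mul_add_mul_div hdisc hfl hp hq0.ne' ht]; ring⟩
  · rintro ⟨r, hr, hr0, -, t, ht, ht0, rfl⟩
    exact ⟨q * t + r, I.add_mem (I.mul_mem hq ht) hr, by positivity,
      by rw [fl_mul_add_mul_div hdisc hfl hp hq0.ne' ht]; ring⟩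

theorem AP_sub_one_subset_Inonneg_diff_Nset (hdisc : ∀ x ∈ I, ¬(0 < x ∧ x < 1))
    (hfl : ∀ x : F, fl x ∈ I ∧ fl x ≤ x ∧ x < fl x + 1) {p q : F} (hp : p ∈ I) (hq : q ∈ I)
    (hq0 : 0 < q) (hqp : q < p) : AP I p (p - 1) ⊆ Inonneg I \ Nset I fl (p / q) := by
  rintro y ⟨t, ht, ht0, rfl⟩
  have hq1 : 1 ≤ q := by simpa using add_one_le_of_lt hdisc I.zero_mem hq hq0
  refine ⟨⟨I.add_mem (I.mul_mem hp ht) (I.sub_mem hp I.one_mem), by nlinarith⟩, ?_⟩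
  rintro ⟨n, hn, -, hy⟩
  obtain ⟨-, hle, hlt⟩ := hfl (n * (p / q))
  rw [← hy, mul_div_assoc', le_div_iff₀ hq0] at hle
  rw [← hy, mul_div_assoc', div_lt_iff₀ hq0] at hlt
  refine hdisc (q * (t + 1) - n) (I.sub_mem (I.mul_mem hq (I.add_mem ht I.one_mem)) hn) ⟨?_, ?_⟩
  · nlinarith
  · nlinarith

end IntegerPart

theorem stmt_1_general {F : Type*} [Field F] [LinearOrder F] [IsStrictOrderedRing F] (I : Subring F) (fl : F → F)
    (hdisc : ∀ x ∈ I, ¬(0 < x ∧ x < 1))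
    (hfl : ∀ x : F, fl x ∈ I ∧ fl x ≤ x ∧ x < fl x + 1)
    (p q : F) (hp : p ∈ I) (hq : q ∈ I) (hq0 : 0 < q)
    (hα : 1 < p / q) :
    Nset I fl (p / q) =
      {y | ∃ r, r ∈ I ∧ 0 ≤ r ∧ r < q ∧ y ∈ AP I p (fl (p * r / q))} ∧
    AP I p (p - 1) ⊆ Inonneg I \ Nset I fl (p / q) :=
  ⟨IntegerPart.Nset_div_eq_setOf_AP hdisc hfl hp hq hq0,
    IntegerPart.AP_sub_one_subset_Inonneg_diff_Nset hdisc hfl hp hq hq0 ((one_lt_div hq0).mp hα)⟩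

theorem stmt_1 {F : Type*} [Field F] [LinearOrder F] [IsStrictOrderedRing F] (I : Subring F) (fl : F → F)
    (hdisc : ∀ x ∈ I, ¬(0 < x ∧ x < 1))
    (hfl : ∀ x : F, fl x ∈ I ∧ fl x ≤ x ∧ x < fl x + 1)
    (p q : F) (hp : p ∈ I) (hp0 : 0 ≤ p) (hq : q ∈ I) (hq0 : 0 < q)
    (hα : 1 < p / q) :
    Nset I fl (p / q) =
      {y | ∃ r, r ∈ I ∧ 0 ≤ r ∧ r < q ∧ y ∈ AP I p (fl (p * r / q))} ∧
    AP I p (p - 1) ⊆ Inonneg I \ Nset I fl (p / q) :=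
  stmt_1_general I fl hdisc hfl p q hp hq hq0 hα
end

section
/- Let F be a linearly ordered field with integer part I, let n be a positive natural number, and let α_1, …, α_n ∈ F all be rational with α_i > 1 for each i. Then the intersection ⋂_{i=1}^n N_{α_i} and the complement I^{≥0} \ ⋃_{i=1}^n N_{α_i} are both cofinal subsets of I. -/
/-- An element of `F` is rational (with respect to `I`) if it lies in the
fraction field of `I` viewed inside `F`. -/
def IsRat {F : Type*} [Field F] [LinearOrder F] [IsStrictOrderedRing F] (I : Subring F) (α : F) : Prop :=
  ∃ p ∈ I, ∃ q ∈ I, q ≠ 0 ∧ α = p / q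

section IntegerPart

open Finset

variable {F : Type*} [Field F] [LinearOrder F] [IsStrictOrderedRing F] {I : Subring F}
  {fl : F → F}

theorem add_one_le_of_lt_of_discrete (hdisc : ∀ x ∈ I, ¬(0 < x ∧ x < 1)) {a b : F}
    (ha : a ∈ I) (hb : b ∈ I) (hab : a < b) : a + 1 ≤ b := by
  by_contra! h
  exact hdisc (b - a) (I.sub_mem hb ha) ⟨by linarith, by linarith⟩

theorem floor_eq_self_of_mem (hdisc : ∀ x ∈ I, ¬(0 < x ∧ x < 1))
    (hfl : ∀ x : F, fl x ∈ I ∧ fl x ≤ x ∧ x < fl x + 1) {x : F} (hx : x ∈ I) : fl x = x := by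
  obtain ⟨hflI, hle, hlt⟩ := hfl x
  by_contra hne
  linarith [add_one_le_of_lt_of_discrete hdisc hflI hx (hle.lt_of_ne hne)]

theorem IsRat.exists_eq_div_of_pos_den {α : F} (h : IsRat I α) :
    ∃ p ∈ I, ∃ q ∈ I, 0 < q ∧ α = p / q := by
  obtain ⟨p, hp, q, hq, hq0, rfl⟩ := h
  rcases hq0.lt_or_gt with hneg | hpos
  · exact ⟨-p, I.neg_mem hp, -q, I.neg_mem hq, neg_pos.mpr hneg, (neg_div_neg_eq p q).symm⟩
  · exact ⟨p, hp, q, hq, hpos, rfl⟩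

theorem exists_common_num {ι : Type*} [Fintype ι] {α : ι → F} (hrat : ∀ i, IsRat I (α i))
    (hpos : ∀ i, 0 < α i) : ∃ P ∈ I, 0 < P ∧ ∀ i, ∃ q ∈ I, 0 < q ∧ α i = P / q := by
  classical
  choose p hpI q hqI hq0 hα using fun i => (hrat i).exists_eq_div_of_pos_den
  have hp0 : ∀ i, 0 < p i := fun i => by
    have := hpos i
    rwa [hα i, div_pos_iff_of_pos_right (hq0 i)] at this
  refine ⟨∏ i, p i, I.prod_mem fun i _ => hpI i, prod_pos fun i _ => hp0 i, fun i => ?_⟩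
  have hR0 : 0 < ∏ j ∈ univ.erase i, p j := prod_pos fun j _ => hp0 j
  refine ⟨q i * ∏ j ∈ univ.erase i, p j, I.mul_mem (hqI i) (I.prod_mem fun j _ => hpI j),
    mul_pos (hq0 i) hR0, ?_⟩
  rw [← mul_prod_erase univ p (mem_univ i), mul_div_mul_right _ _ hR0.ne', hα i]

theorem mul_mem_Nset_div (hdisc : ∀ x ∈ I, ¬(0 < x ∧ x < 1))
    (hfl : ∀ x : F, fl x ∈ I ∧ fl x ≤ x ∧ x < fl x + 1) {p q c : F} (hp : p ∈ I) (hq : q ∈ I)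
    (hq0 : 0 < q) (hc : c ∈ I) (hc0 : 0 ≤ c) : c * p ∈ Nset I fl (p / q) := by
  refine ⟨c * q, I.mul_mem hc hq, mul_nonneg hc0 hq0.le, ?_⟩
  rw [mul_assoc, mul_div_cancel₀ _ hq0.ne', floor_eq_self_of_mem hdisc hfl (I.mul_mem hc hp)]

theorem mul_sub_one_notMem_Nset_div (hdisc : ∀ x ∈ I, ¬(0 < x ∧ x < 1))
    (hfl : ∀ x : F, fl x ∈ I ∧ fl x ≤ x ∧ x < fl x + 1) {p q c : F} (hq : q ∈ I)
    (hq0 : 0 < q) (hqp : q < p) (hc : c ∈ I) : c * p - 1 ∉ Nset I fl (p / q) := by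
  rintro ⟨m, hm, -, hfloor⟩
  obtain ⟨-, hle, hlt⟩ := hfl (m * (p / q))
  rw [← hfloor, mul_div_assoc', le_div_iff₀ hq0] at hle
  rw [← hfloor, mul_div_assoc', div_lt_iff₀ hq0, sub_add_cancel] at hlt
  have hp0 : 0 < p := hq0.trans hqp
  have hmcq : m < c * q := lt_of_mul_lt_mul_right (by linarith) hp0.le
  have hstep := mul_le_mul_of_nonneg_right
    (add_one_le_of_lt_of_discrete hdisc hm (I.mul_mem hc hq) hmcq) hp0.le
  -- `m * p ≤ c * q * p - p < c * q * p - q ≤ m * p`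
  nlinarith

end IntegerPart

theorem stmt_2_general {F : Type*} [Field F] [LinearOrder F] [IsStrictOrderedRing F] (I : Subring F) (fl : F → F)
    (hdisc : ∀ x ∈ I, ¬(0 < x ∧ x < 1))
    (hfl : ∀ x : F, fl x ∈ I ∧ fl x ≤ x ∧ x < fl x + 1)
    (n : ℕ) (α : Fin n → F)
    (hrat : ∀ i, IsRat I (α i)) (hgt : ∀ i, 1 < α i) :
    (∀ x ∈ I, ∃ s ∈ ⋂ i, Nset I fl (α i), x ≤ s) ∧
    (∀ x ∈ I, ∃ s ∈ Inonneg I \ ⋃ i, Nset I fl (α i), x ≤ s) := by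
  obtain ⟨P, hPI, hP0, hden⟩ := exists_common_num hrat fun i => one_pos.trans (hgt i)
  choose q hqI hq0 hα using hden
  have hP1 : 1 ≤ P := by simpa using add_one_le_of_lt_of_discrete hdisc I.zero_mem hPI hP0
  have hnonneg_ge : ∀ x ∈ I, ∃ t ∈ I, 0 ≤ t ∧ x ≤ t := fun x hx =>
    ⟨max x 0, by rcases max_choice x 0 with h | h <;> rw [h]; exacts [hx, I.zero_mem],
      le_max_right x 0, le_max_left x 0⟩
  refine ⟨fun x hx => ?_, fun x hx => ?_⟩
  · obtain ⟨t, htI, ht0, hxt⟩ := hnonneg_ge x hx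
    refine ⟨t * P, Set.mem_iInter.mpr fun i => ?_, hxt.trans (le_mul_of_one_le_right ht0 hP1)⟩
    rw [hα i]
    exact mul_mem_Nset_div hdisc hfl hPI (hqI i) (hq0 i) htI ht0
  · obtain ⟨t, htI, ht0, hxt⟩ := hnonneg_ge x hx
    have htP : t + 1 ≤ (t + 1) * P := le_mul_of_one_le_right (by linarith) hP1
    refine ⟨(t + 1) * P - 1,
      ⟨⟨I.sub_mem (I.mul_mem (I.add_mem htI I.one_mem) hPI) I.one_mem, by linarith⟩,
        Set.mem_iUnion.not.mpr fun ⟨i, hi⟩ => ?_⟩, by linarith⟩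
    have hqP : q i < P := (one_lt_div (hq0 i)).mp (hα i ▸ hgt i)
    rw [hα i] at hi
    exact mul_sub_one_notMem_Nset_div hdisc hfl (hqI i) (hq0 i) hqP (I.add_mem htI I.one_mem) hi

theorem stmt_2 {F : Type*} [Field F] [LinearOrder F] [IsStrictOrderedRing F] (I : Subring F) (fl : F → F)
    (hdisc : ∀ x ∈ I, ¬(0 < x ∧ x < 1))
    (hfl : ∀ x : F, fl x ∈ I ∧ fl x ≤ x ∧ x < fl x + 1)
    (n : ℕ) (hn : 0 < n) (α : Fin n → F)
    (hrat : ∀ i, IsRat I (α i)) (hgt : ∀ i, 1 < α i) :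
    (∀ x ∈ I, ∃ s ∈ ⋂ i, Nset I fl (α i), x ≤ s) ∧
    (∀ x ∈ I, ∃ s ∈ Inonneg I \ ⋃ i, Nset I fl (α i), x ≤ s) :=
  stmt_2_general I fl hdisc hfl n α hrat hgt
end

section
/- Let F be a linearly ordered field with integer part I and let α, β ∈ F be positive irrationals such that α^{−1} + β^{−1} = 1. Then N_α ∩ N_β = {0} and N_α ∪ N_β = I^{≥0}. -/
namespace IntegerPart

lemma fl_lt_of_notMem {R : Type*} [Ring R] [PartialOrder R] {I : Subring R} {fl : R → R}
    (hfl : ∀ x : R, fl x ∈ I ∧ fl x ≤ x ∧ x < fl x + 1) {x : R} (hx : x ∉ I) : fl x < x :=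
  (hfl x).2.1.lt_of_ne fun h => hx (h ▸ (hfl x).1)

variable {F : Type*} [Field F] [LinearOrder F] [IsStrictOrderedRing F] {I : Subring F}
  {fl : F → F}

lemma add_one_le_of_lt_s4 (hdisc : ∀ x ∈ I, ¬(0 < x ∧ x < 1)) {m n : F} (hm : m ∈ I)
    (hn : n ∈ I) (h : m < n) : m + 1 ≤ n := by
  by_contra! h'
  exact hdisc (n - m) (I.sub_mem hn hm) ⟨by linarith, by linarith⟩

lemma le_fl_iff (hdisc : ∀ x ∈ I, ¬(0 < x ∧ x < 1))
    (hfl : ∀ x : F, fl x ∈ I ∧ fl x ≤ x ∧ x < fl x + 1) {n : F} (hn : n ∈ I) (x : F) :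
    n ≤ fl x ↔ n ≤ x := by
  obtain ⟨hxI, hle, hlt⟩ := hfl x
  refine ⟨fun h => h.trans hle, fun h => ?_⟩
  by_contra! h'
  linarith [add_one_le_of_lt_s4 hdisc hxI hn h']

lemma fl_lt_iff (hdisc : ∀ x ∈ I, ¬(0 < x ∧ x < 1))
    (hfl : ∀ x : F, fl x ∈ I ∧ fl x ≤ x ∧ x < fl x + 1) {n : F} (hn : n ∈ I) (x : F) :
    fl x < n ↔ x < n := by
  simpa only [not_le] using (le_fl_iff hdisc hfl hn x).not

lemma fl_eq_of_le_of_lt (hdisc : ∀ x ∈ I, ¬(0 < x ∧ x < 1))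
    (hfl : ∀ x : F, fl x ∈ I ∧ fl x ≤ x ∧ x < fl x + 1) {n x : F} (hn : n ∈ I) (h₁ : n ≤ x)
    (h₂ : x < n + 1) : fl x = n := by
  have hlt : fl x < n + 1 := (fl_lt_iff hdisc hfl (I.add_mem hn I.one_mem) x).2 h₂
  have hle : fl x + 1 ≤ n + 1 := add_one_le_of_lt_s4 hdisc (hfl x).1 (I.add_mem hn I.one_mem) hlt
  exact le_antisymm (by linarith) ((le_fl_iff hdisc hfl hn x).2 h₁)

lemma div_notMem {α : F} (hirr : ¬IsRat I α) {k : F} (hk : k ∈ I) (hk0 : k ≠ 0) :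
    k / α ∉ I := by
  intro h
  have hα : α ≠ 0 := by
    rintro rfl
    exact hirr ⟨0, I.zero_mem, 1, I.one_mem, one_ne_zero, by simp⟩
  exact hirr ⟨k, hk, k / α, h, div_ne_zero hk0 hα, by field_simp⟩

lemma fl_div_add_fl_div (hdisc : ∀ x ∈ I, ¬(0 < x ∧ x < 1))
    (hfl : ∀ x : F, fl x ∈ I ∧ fl x ≤ x ∧ x < fl x + 1) {α β : F}
    (hαirr : ¬IsRat I α) (hβirr : ¬IsRat I β) (hsum : α⁻¹ + β⁻¹ = 1) {k : F} (hk : k ∈ I)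
    (hk0 : k ≠ 0) : fl (k / α) + fl (k / β) = k - 1 := by
  have hlt_α := fl_lt_of_notMem hfl (div_notMem hαirr hk hk0)
  have hlt_β := fl_lt_of_notMem hfl (div_notMem hβirr hk hk0)
  have hgt_α := (hfl (k / α)).2.2
  have hgt_β := (hfl (k / β)).2.2
  have hksum : k / α + k / β = k := by rw [div_eq_mul_inv, div_eq_mul_inv, ← mul_add, hsum, mul_one]
  have hsumI : fl (k / α) + fl (k / β) ∈ I := I.add_mem (hfl _).1 (hfl _).1
  have hupper := add_one_le_of_lt_s4 hdisc hsumI hk (by linarith)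
  have hlower := add_one_le_of_lt_s4 hdisc (I.sub_mem hk I.one_mem) (I.add_mem hsumI I.one_mem)
    (by linarith)
  linarith

lemma mem_Nset_iff (hdisc : ∀ x ∈ I, ¬(0 < x ∧ x < 1))
    (hfl : ∀ x : F, fl x ∈ I ∧ fl x ≤ x ∧ x < fl x + 1) {α : F} (hα0 : 0 < α)
    (hirr : ¬IsRat I α) {k : F} (hk : k ∈ I) (hk0 : 0 < k) :
    k ∈ Nset I fl α ↔ fl (k / α) < fl ((k + 1) / α) := by
  have hk1 : k + 1 ∈ I := I.add_mem hk I.one_mem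
  have hne : ∀ n ∈ I, n * α ≠ k ∧ n * α ≠ k + 1 := fun n hn => by
    refine ⟨fun h => div_notMem hirr hk hk0.ne' ?_, fun h => div_notMem hirr hk1 (by linarith) ?_⟩
    all_goals rwa [← h, mul_div_cancel_right₀ _ hα0.ne']
  constructor
  · rintro ⟨n, hn, -, rfl⟩
    obtain ⟨-, hle, hlt⟩ := hfl (n * α)
    have hlo : fl (n * α) / α < n := (div_lt_iff₀ hα0).2 (hle.lt_of_ne (hne n hn).1.symm)
    have hhi : n ≤ (fl (n * α) + 1) / α := (le_div_iff₀ hα0).2 hlt.le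
    exact ((fl_lt_iff hdisc hfl hn _).2 hlo).trans_le ((le_fl_iff hdisc hfl hn _).2 hhi)
  · intro h
    set n := fl ((k + 1) / α)
    have hn : n ∈ I := (hfl _).1
    have hlo : k < n * α := (div_lt_iff₀ hα0).1 ((fl_lt_iff hdisc hfl hn _).1 h)
    have hhi : n * α < k + 1 :=
      ((le_div_iff₀ hα0).1 (hfl _).2.1).lt_of_ne (hne n hn).2
    exact ⟨n, hn, (pos_of_mul_pos_left (hk0.trans hlo) hα0.le).le,
      (fl_eq_of_le_of_lt hdisc hfl hk hlo.le hhi).symm⟩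

lemma mem_Nset_iff_notMem_Nset (hdisc : ∀ x ∈ I, ¬(0 < x ∧ x < 1))
    (hfl : ∀ x : F, fl x ∈ I ∧ fl x ≤ x ∧ x < fl x + 1) {α β : F} (hα0 : 0 < α) (hβ0 : 0 < β)
    (hαirr : ¬IsRat I α) (hβirr : ¬IsRat I β) (hsum : α⁻¹ + β⁻¹ = 1) {k : F} (hk : k ∈ I)
    (hk0 : 0 < k) : k ∈ Nset I fl α ↔ k ∉ Nset I fl β := by
  have hsk := fl_div_add_fl_div hdisc hfl hαirr hβirr hsum hk hk0.ne'
  have hsk1 := fl_div_add_fl_div hdisc hfl hαirr hβirr hsum (I.add_mem hk I.one_mem)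
    (by linarith)
  rw [mem_Nset_iff hdisc hfl hα0 hαirr hk hk0, mem_Nset_iff hdisc hfl hβ0 hβirr hk hk0, not_lt]
  refine ⟨fun h => ?_, fun h => lt_of_not_ge fun h' => by linarith⟩
  linarith [add_one_le_of_lt_s4 hdisc (hfl _).1 (hfl _).1 h]

lemma zero_mem_Nset (hdisc : ∀ x ∈ I, ¬(0 < x ∧ x < 1))
    (hfl : ∀ x : F, fl x ∈ I ∧ fl x ≤ x ∧ x < fl x + 1) (α : F) : 0 ∈ Nset I fl α :=
  ⟨0, I.zero_mem, le_rfl, by rw [zero_mul, fl_eq_of_le_of_lt hdisc hfl I.zero_mem le_rfl (by simp)]⟩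

lemma Nset_subset_Inonneg (hdisc : ∀ x ∈ I, ¬(0 < x ∧ x < 1))
    (hfl : ∀ x : F, fl x ∈ I ∧ fl x ≤ x ∧ x < fl x + 1) {α : F} (hα0 : 0 < α) :
    Nset I fl α ⊆ Inonneg I := by
  rintro _ ⟨n, -, hn0, rfl⟩
  exact ⟨(hfl _).1, (le_fl_iff hdisc hfl I.zero_mem _).2 (mul_nonneg hn0 hα0.le)⟩

end IntegerPart

theorem stmt_4 {F : Type*} [Field F] [LinearOrder F] [IsStrictOrderedRing F] (I : Subring F) (fl : F → F)
    (hdisc : ∀ x ∈ I, ¬(0 < x ∧ x < 1))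
    (hfl : ∀ x : F, fl x ∈ I ∧ fl x ≤ x ∧ x < fl x + 1)
    (α β : F) (hα0 : 0 < α) (hβ0 : 0 < β)
    (hαirr : ¬ IsRat I α) (hβirr : ¬ IsRat I β)
    (hsum : α⁻¹ + β⁻¹ = 1) :
    Nset I fl α ∩ Nset I fl β = {0} ∧ Nset I fl α ∪ Nset I fl β = Inonneg I := by
  have hpos : ∀ x ∈ Inonneg I, x ≠ 0 → (x ∈ Nset I fl α ↔ x ∉ Nset I fl β) :=
    fun x ⟨hxI, hx0⟩ hx => IntegerPart.mem_Nset_iff_notMem_Nset hdisc hfl hα0 hβ0 hαirr hβirr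
      hsum hxI (hx0.lt_of_ne' hx)
  have hsubα := IntegerPart.Nset_subset_Inonneg hdisc hfl hα0
  have hsubβ := IntegerPart.Nset_subset_Inonneg hdisc hfl hβ0
  have h0α := IntegerPart.zero_mem_Nset hdisc hfl α
  refine ⟨Set.eq_singleton_iff_unique_mem.2
    ⟨⟨h0α, IntegerPart.zero_mem_Nset hdisc hfl β⟩, ?_⟩,
    (Set.union_subset hsubα hsubβ).antisymm ?_⟩
  · rintro x ⟨hxα, hxβ⟩
    by_contra hx
    exact (hpos x (hsubα hxα) hx).1 hxα hxβ
  · intro x hx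
    by_cases hx0 : x = 0
    · exact Or.inl (hx0 ▸ h0α)
    by_cases hxβ : x ∈ Nset I fl β
    · exact Or.inr hxβ
    · exact Or.inl ((hpos x hx hx0).2 hxβ)
end

section
/- Let F be a linearly ordered field with integer part I and let α, β ∈ F be distinct irrationals with α, β > 1. Then N_α ≠ N_β. -/
/-! If `2 < α < β`, put `L = ⌊1/(β - α)⌋`: then `Lβ + 1 < (L+1)α < (L+1)β - 1`, so no
multiple of `β` comes within `1` of `(L+1)α` and `⌊(L+1)α⌋ ∉ N_β`. If `α < 2 < β`, then
`1 ∈ N_α \ N_β`. If both lie in `(1, 2)`, Beatty's theorem says that the positive elements of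
`N_{α/(α-1)}` are exactly the positive integers outside `N_α`, so `N_α = N_β` would give the same
equality for the conjugates `α/(α-1)` and `β/(β-1)`, which both exceed `2`. -/

/-- `fl` is the floor function of the integer part `I`. -/
structure IsIntegerPart {F : Type*} [Field F] [LinearOrder F] [IsStrictOrderedRing F]
    (I : Subring F) (fl : F → F) : Prop where
  discrete : ∀ x ∈ I, ¬(0 < x ∧ x < 1)
  fl_mem : ∀ x, fl x ∈ I
  fl_le : ∀ x, fl x ≤ x
  lt_fl_add_one : ∀ x, x < fl x + 1

section

variable {F : Type*} [Field F] [LinearOrder F] [IsStrictOrderedRing F] {I : Subring F}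

lemma isRat_of_mem {a : F} (ha : a ∈ I) : IsRat I a :=
  ⟨a, ha, 1, I.one_mem, one_ne_zero, (div_one a).symm⟩

lemma mul_notMem_of_not_isRat {α n : F} (hα : ¬IsRat I α) (hn : n ∈ I) (hn0 : n ≠ 0) :
    n * α ∉ I :=
  fun h => hα ⟨n * α, h, n, hn, hn0, by field_simp⟩

lemma div_notMem_of_not_isRat {α m : F} (hα : ¬IsRat I α) (hm : m ∈ I) (hm0 : m ≠ 0) :
    m / α ∉ I := by
  have hα0 : α ≠ 0 := fun h => hα (h ▸ isRat_of_mem I.zero_mem)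
  exact fun h => hα ⟨m, hm, m / α, h, div_ne_zero hm0 hα0, by field_simp⟩

lemma not_isRat_div_sub_one {α : F} (hα : ¬IsRat I α) : ¬IsRat I (α / (α - 1)) := by
  rintro ⟨p, hp, q, hq, hq0, hpq⟩
  have hα1 : α - 1 ≠ 0 := sub_ne_zero.2 fun h => hα (h ▸ isRat_of_mem I.one_mem)
  rw [div_eq_div_iff hα1 hq0] at hpq
  have hpq0 : p - q ≠ 0 := by
    intro h
    obtain rfl : p = q := sub_eq_zero.1 h
    exact hq0 (by linear_combination hpq)
  refine hα ⟨p, hp, p - q, sub_mem hp hq, hpq0, ?_⟩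
  rw [eq_div_iff hpq0]
  linear_combination -hpq

lemma two_lt_div_sub_one {α : F} (h1 : 1 < α) (h2 : α < 2) : 2 < α / (α - 1) := by
  rw [lt_div_iff₀ (by linarith)]
  linarith

lemma eq_of_div_sub_one_eq {α β : F} (hα : α ≠ 1) (hβ : β ≠ 1)
    (h : α / (α - 1) = β / (β - 1)) : α = β := by
  rw [div_eq_div_iff (sub_ne_zero.2 hα) (sub_ne_zero.2 hβ)] at h
  linear_combination -h

namespace IsIntegerPart

variable {fl : F → F} (hI : IsIntegerPart I fl)
include hI

lemma one_le_of_pos {n : F} (hn : n ∈ I) (h : 0 < n) : 1 ≤ n :=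
  not_lt.1 fun h' => hI.discrete n hn ⟨h, h'⟩

lemma add_one_le_of_lt {a b : F} (ha : a ∈ I) (hb : b ∈ I) (h : a < b) : a + 1 ≤ b := by
  linarith [hI.one_le_of_pos (sub_mem hb ha) (sub_pos.2 h)]

lemma fl_eq_of_le_of_lt {x a : F} (ha : a ∈ I) (h1 : a ≤ x) (h2 : x < a + 1) : fl x = a := by
  have := hI.fl_le x
  have := hI.lt_fl_add_one x
  rcases lt_trichotomy (fl x) a with h | h | h
  · linarith [hI.add_one_le_of_lt (hI.fl_mem x) ha h]
  · exact h
  · linarith [hI.add_one_le_of_lt ha (hI.fl_mem x) h]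

lemma fl_of_mem {n : F} (hn : n ∈ I) : fl n = n :=
  hI.fl_eq_of_le_of_lt hn le_rfl (lt_add_one n)

lemma le_fl_iff {n x : F} (hn : n ∈ I) : n ≤ fl x ↔ n ≤ x := by
  refine ⟨fun h => h.trans (hI.fl_le x), fun h => not_lt.1 fun h' => ?_⟩
  linarith [hI.add_one_le_of_lt (hI.fl_mem x) hn h', hI.lt_fl_add_one x]

lemma fl_lt_iff {n x : F} (hn : n ∈ I) : fl x < n ↔ x < n :=
  not_le.symm.trans ((not_congr (hI.le_fl_iff hn)).trans not_le)

lemma fl_nonneg {x : F} (hx : 0 ≤ x) : 0 ≤ fl x :=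
  (hI.le_fl_iff I.zero_mem).2 hx

lemma fl_lt_of_notMem {x : F} (hx : x ∉ I) : fl x < x :=
  (hI.fl_le x).lt_of_ne fun h => hx (h ▸ hI.fl_mem x)

lemma fl_add_fl_sub_of_notMem {x m : F} (hx : x ∉ I) (hm : m ∈ I) :
    fl x + fl (m - x) = m - 1 := by
  have hmx : m - x ∉ I := fun h => hx (by simpa using sub_mem hm h)
  set s := m - (fl x + fl (m - x))
  have hs : s ∈ I := sub_mem hm (add_mem (hI.fl_mem x) (hI.fl_mem _))
  have hs0 : 0 < s := by linarith [hI.fl_lt_of_notMem hx, hI.fl_lt_of_notMem hmx]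
  have hs2 : s < 1 + 1 := by linarith [hI.lt_fl_add_one x, hI.lt_fl_add_one (m - x)]
  have hs1 : s = 1 :=
    le_antisymm (not_lt.1 fun h => (hI.add_one_le_of_lt I.one_mem hs h).not_gt hs2)
      (hI.one_le_of_pos hs hs0)
  linarith

lemma zero_mem_nset (α : F) : (0 : F) ∈ Nset I fl α :=
  ⟨0, I.zero_mem, le_rfl, by rw [zero_mul, hI.fl_of_mem I.zero_mem]⟩

/-- The multiples of `α` hitting `[m, m + 1)` are the elements of `I` in `(m/α, (m+1)/α)`. -/
lemma mem_nset_iff {α m : F} (hα : 0 < α) (hirr : ¬IsRat I α) (hm : m ∈ I) (hm0 : 0 < m) :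
    m ∈ Nset I fl α ↔ fl (m / α) < fl ((m + 1) / α) := by
  constructor
  · rintro ⟨n, hn, -, rfl⟩
    have hn0 : n ≠ 0 := by
      rintro rfl
      rw [zero_mul, hI.fl_of_mem I.zero_mem] at hm0
      exact hm0.false
    have hlo : fl (n * α) < n * α :=
      hI.fl_lt_of_notMem (mul_notMem_of_not_isRat hirr hn hn0)
    have hhi := hI.lt_fl_add_one (n * α)
    calc fl (fl (n * α) / α) < n :=
          (hI.fl_lt_iff hn).2 ((div_lt_iff₀ hα).2 hlo)
      _ ≤ fl ((fl (n * α) + 1) / α) := (hI.le_fl_iff hn).2 ((le_div_iff₀ hα).2 hhi.le)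
  · intro h
    set n := fl ((m + 1) / α)
    have hn : n ∈ I := hI.fl_mem _
    have hn0 : 0 < n := (hI.fl_nonneg (div_pos hm0 hα).le).trans_lt h
    have hlo : m < n * α := (div_lt_iff₀ hα).1 ((hI.fl_lt_iff hn).1 h)
    have hhi : n * α < m + 1 :=
      ((le_div_iff₀ hα).1 (hI.fl_le _)).lt_of_ne
        fun h => mul_notMem_of_not_isRat hirr hn hn0.ne' (h ▸ add_mem hm I.one_mem)
    exact ⟨n, hn, hn0.le, (hI.fl_eq_of_le_of_lt hm hlo.le hhi).symm⟩

/-- Beatty's theorem. -/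
lemma mem_nset_div_sub_one_iff {α m : F} (hα : 1 < α) (hirr : ¬IsRat I α) (hm : m ∈ I)
    (hm0 : 0 < m) : m ∈ Nset I fl (α / (α - 1)) ↔ m ∉ Nset I fl α := by
  have hα0 : 0 < α := by linarith
  have hm1 : m + 1 ∈ I := add_mem hm I.one_mem
  have hconj : ∀ k : F, k / (α / (α - 1)) = k - k / α := fun k => by
    field_simp
  have ha := hI.fl_add_fl_sub_of_notMem (div_notMem_of_not_isRat hirr hm hm0.ne') hm
  have hb := hI.fl_add_fl_sub_of_notMem (div_notMem_of_not_isRat hirr hm1 (by linarith)) hm1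
  rw [hI.mem_nset_iff (div_pos hα0 (by linarith)) (not_isRat_div_sub_one hirr) hm hm0,
    hI.mem_nset_iff hα0 hirr hm hm0, hconj, hconj, not_lt]
  constructor
  · intro h
    refine not_lt.1 fun h' => ?_
    linarith [hI.add_one_le_of_lt (hI.fl_mem _) (hI.fl_mem _) h']
  · intro h
    linarith

lemma mem_nset_div_sub_one_iff' {α y : F} (hα : 1 < α) (hirr : ¬IsRat I α) :
    y ∈ Nset I fl (α / (α - 1)) ↔ y = 0 ∨ (y ∈ I ∧ 0 < y ∧ y ∉ Nset I fl α) := by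
  constructor
  · intro hy
    obtain ⟨n, -, hn0, rfl⟩ := id hy
    have hα' : 0 < α / (α - 1) := div_pos (by linarith) (by linarith)
    have hpos := hI.fl_nonneg (mul_nonneg hn0 hα'.le)
    rcases hpos.eq_or_lt with h0 | hpos
    · exact Or.inl h0.symm
    · exact Or.inr ⟨hI.fl_mem _, hpos,
        (hI.mem_nset_div_sub_one_iff hα hirr (hI.fl_mem _) hpos).1 hy⟩
  · rintro (rfl | ⟨hy, hpos, hyα⟩)
    · exact hI.zero_mem_nset _
    · exact (hI.mem_nset_div_sub_one_iff hα hirr hy hpos).2 hyα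

lemma nset_div_sub_one_eq {α β : F} (hα : 1 < α) (hβ : 1 < β) (hαirr : ¬IsRat I α)
    (hβirr : ¬IsRat I β) (h : Nset I fl α = Nset I fl β) :
    Nset I fl (α / (α - 1)) = Nset I fl (β / (β - 1)) := by
  ext y
  rw [hI.mem_nset_div_sub_one_iff' hα hαirr, hI.mem_nset_div_sub_one_iff' hβ hβirr, h]

lemma fl_notMem_nset_of_lt_of_lt {x β L : F} (hL : L ∈ I) (h1 : 1 < x - L * β)
    (h2 : x - L * β < β - 1) : fl x ∉ Nset I fl β := by
  rintro ⟨u, hu, -, he⟩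
  have hβ : 0 < β := by linarith
  have hx1 := hI.fl_le x
  have hx2 := hI.lt_fl_add_one x
  have hu1 := hI.fl_le (u * β)
  have hu2 := hI.lt_fl_add_one (u * β)
  rcases lt_trichotomy u L with h | rfl | h
  · nlinarith [hI.add_one_le_of_lt hu hL h]
  · linarith
  · nlinarith [hI.add_one_le_of_lt hL hu h]

lemma nset_ne_of_two_lt_of_lt {α β : F} (hα : 2 < α) (hαβ : α < β) :
    Nset I fl α ≠ Nset I fl β := by
  have hγ : 0 < β - α := sub_pos.2 hαβ
  set L := fl (1 / (β - α))
  have hL : L ∈ I := hI.fl_mem _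
  have hL0 : 0 ≤ L := hI.fl_nonneg (by positivity)
  have hLγ : L * (β - α) ≤ 1 := (le_div_iff₀ hγ).1 (hI.fl_le _)
  have hLγ' : 1 < (L + 1) * (β - α) := (div_lt_iff₀ hγ).1 (hI.lt_fl_add_one _)
  intro h
  have hmem : fl ((L + 1) * α) ∈ Nset I fl α :=
    ⟨L + 1, add_mem hL I.one_mem, by linarith, rfl⟩
  rw [h] at hmem
  exact hI.fl_notMem_nset_of_lt_of_lt hL (by linarith) (by linarith) hmem

lemma nset_ne_of_two_lt {α β : F} (hα : 2 < α) (hβ : 2 < β) (hne : α ≠ β) :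
    Nset I fl α ≠ Nset I fl β := by
  rcases hne.lt_or_gt with h | h
  · exact hI.nset_ne_of_two_lt_of_lt hα h
  · exact (hI.nset_ne_of_two_lt_of_lt hβ h).symm

lemma nset_ne_of_lt_two_of_two_lt {α β : F} (hα1 : 1 < α) (hα2 : α < 2) (hβ : 2 < β) :
    Nset I fl α ≠ Nset I fl β := by
  have hα : fl (1 * α) = 1 := by
    rw [one_mul]
    exact hI.fl_eq_of_le_of_lt I.one_mem hα1.le (by linarith)
  intro h
  have hmem : (1 : F) ∈ Nset I fl α := ⟨1, I.one_mem, zero_le_one, hα.symm⟩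
  rw [h] at hmem
  obtain ⟨u, hu, hu0, he⟩ := hmem
  rcases hu0.eq_or_lt with rfl | hpos
  · rw [zero_mul, hI.fl_of_mem I.zero_mem] at he
    exact one_ne_zero he
  · nlinarith [hI.one_le_of_pos hu hpos, hI.lt_fl_add_one (u * β)]

end IsIntegerPart

end

theorem stmt_6 {F : Type*} [Field F] [LinearOrder F] [IsStrictOrderedRing F] (I : Subring F) (fl : F → F)
    (hdisc : ∀ x ∈ I, ¬(0 < x ∧ x < 1))
    (hfl : ∀ x : F, fl x ∈ I ∧ fl x ≤ x ∧ x < fl x + 1)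
    (α β : F) (hα1 : 1 < α) (hβ1 : 1 < β)
    (hαirr : ¬ IsRat I α) (hβirr : ¬ IsRat I β) (hne : α ≠ β) :
    Nset I fl α ≠ Nset I fl β := by
  have hI : IsIntegerPart I fl :=
    ⟨hdisc, fun x => (hfl x).1, fun x => (hfl x).2.1, fun x => (hfl x).2.2⟩
  have h2 : IsRat I 2 := isRat_of_mem (ofNat_mem I 2)
  have hα2 : α ≠ 2 := fun h => hαirr (h ▸ h2)
  have hβ2 : β ≠ 2 := fun h => hβirr (h ▸ h2)
  rcases hα2.lt_or_gt with hα2 | hα2 <;> rcases hβ2.lt_or_gt with hβ2 | hβ2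
  · exact fun h => hI.nset_ne_of_two_lt (two_lt_div_sub_one hα1 hα2)
      (two_lt_div_sub_one hβ1 hβ2) (fun h' => hne (eq_of_div_sub_one_eq hα1.ne' hβ1.ne' h'))
      (hI.nset_div_sub_one_eq hα1 hβ1 hαirr hβirr h)
  · exact hI.nset_ne_of_lt_two_of_two_lt hα1 hα2 hβ2
  · exact (hI.nset_ne_of_lt_two_of_two_lt hβ1 hβ2 hα2).symm
  · exact hI.nset_ne_of_two_lt hα2 hβ2 hne
end

section
/- Let F be a linearly ordered field with integer part I and let ρ, σ ∈ F be distinct rationals with ρ, σ > 1. Then N_ρ ≠ N_σ. -/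
set_option maxHeartbeats 2000000 in
private lemma key_lemma {F : Type*} [Field F] [LinearOrder F] [IsStrictOrderedRing F] (I : Subring F) (fl : F → F)
    (hdisc : ∀ x ∈ I, ¬(0 < x ∧ x < 1))
    (hfl : ∀ x : F, fl x ∈ I ∧ fl x ≤ x ∧ x < fl x + 1)
    (m a b : F) (hmI : m ∈ I) (haI : a ∈ I) (hbI : b ∈ I)
    (hm0 : 0 < m) (hma : m < a) (hab : a < b)
    (hN : Nset I fl (a / m) = Nset I fl (b / m)) : False := by
  have hm' : m ≠ 0 := ne_of_gt hm0
  have step : ∀ x ∈ I, ∀ y ∈ I, x < y → x + 1 ≤ y := by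
    intro x hx y hy hxy
    by_contra hcon
    push_neg at hcon
    exact hdisc (y - x) (I.sub_mem hy hx) ⟨by linarith, by linarith⟩
  have hm1 : (1 : F) ≤ m := by have := step 0 I.zero_mem m hmI hm0; linarith
  have ha0 : 0 < a := lt_trans hm0 hma
  have hmb : m < b := lt_trans hma hab
  have hb0 : 0 < b := lt_trans hm0 hmb
  have flI : ∀ x : F, fl x ∈ I := fun x => (hfl x).1
  have fl_le : ∀ x : F, fl x ≤ x := fun x => (hfl x).2.1
  have fl_lt : ∀ x : F, x < fl x + 1 := fun x => (hfl x).2.2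
  -- floor division
  have hdiv : ∀ u v : F, 0 < v → fl (u / v) * v ≤ u ∧ u < fl (u / v) * v + v := by
    intro u v hv
    constructor
    · have h1 := mul_le_mul_of_nonneg_right (fl_le (u / v)) hv.le
      rwa [div_mul_cancel₀ u (ne_of_gt hv)] at h1
    · have h2 := mul_lt_mul_of_pos_right (fl_lt (u / v)) hv
      rw [div_mul_cancel₀ u (ne_of_gt hv)] at h2
      have h3 : (fl (u / v) + 1) * v = fl (u / v) * v + v := by ring
      linarith
  -- bounds for floors of n*(g/m)
  have bnd : ∀ n g : F, fl (n * (g / m)) * m ≤ n * g ∧ n * g < fl (n * (g / m)) * m + m := by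
    intro n g
    have e : n * (g / m) * m = n * g := by field_simp
    constructor
    · have h1 := mul_le_mul_of_nonneg_right (fl_le (n * (g / m))) hm0.le
      rwa [e] at h1
    · have h2 := mul_lt_mul_of_pos_right (fl_lt (n * (g / m))) hm0
      rw [e] at h2
      have h3 : (fl (n * (g / m)) + 1) * m = fl (n * (g / m)) * m + m := by ring
      linarith
  -- membership criterion
  have memN : ∀ g w n : F, w ∈ I → n ∈ I → 0 ≤ n →
      w * m ≤ n * g → n * g < w * m + m → w ∈ Nset I fl (g / m) := by
    intro g w n hwI hnI hn0 h1 h2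
    have e : n * (g / m) = n * g / m := by rw [mul_div_assoc]
    have e1 : w ≤ n * (g / m) := by
      rw [e]
      exact (le_div_iff₀ hm0).mpr (by linarith)
    have e2 : n * (g / m) < w + 1 := by
      rw [e]
      refine (div_lt_iff₀ hm0).mpr ?_
      have h3 : (w + 1) * m = w * m + m := by ring
      linarith
    have h3 : fl (n * (g / m)) ≤ w := by
      by_contra hcon
      push_neg at hcon
      have hs := step w hwI (fl (n * (g / m))) (flI _) hcon
      have := fl_le (n * (g / m))
      linarith
    have h4 : w ≤ fl (n * (g / m)) := by
      by_contra hcon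
      push_neg at hcon
      have hs := step (fl (n * (g / m))) (flI _) w hwI hcon
      have := fl_lt (n * (g / m))
      linarith
    exact ⟨n, hnI, hn0, le_antisymm h4 h3⟩
  -- elimination
  have elimN : ∀ g w : F, w ∈ Nset I fl (g / m) →
      ∃ n, n ∈ I ∧ 0 ≤ n ∧ w * m ≤ n * g ∧ n * g < w * m + m := by
    intro g w hw
    obtain ⟨n, hnI, hn0, hwe⟩ := hw
    obtain ⟨b1, b2⟩ := bnd n g
    exact ⟨n, hnI, hn0, by rw [hwe]; exact b1, by rw [hwe]; exact b2⟩
  rcases le_or_gt (2 * m) a with h2a | h2a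
  · -- Case 1 : 2m ≤ a
    have hd0 : 0 < b - a := by linarith
    obtain ⟨n₀, hn₀⟩ : ∃ x : F, x = fl ((b + m) / (b - a)) + 1 := ⟨_, rfl⟩
    have hn₀I : n₀ ∈ I := by rw [hn₀]; exact I.add_mem (flI _) I.one_mem
    obtain ⟨hq1, hq2⟩ := hdiv (b + m) (b - a) hd0
    have he : n₀ * (b - a) = fl ((b + m) / (b - a)) * (b - a) + (b - a) := by
      rw [hn₀]; ring
    have hlb : b + m < n₀ * (b - a) := by linarith
    have hub : n₀ * (b - a) ≤ b + m + (b - a) := by linarith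
    have hn₀0 : 0 ≤ n₀ := by
      by_contra hcon
      push_neg at hcon
      have : n₀ * (b - a) < 0 := mul_neg_of_neg_of_pos hcon hd0
      linarith
    have hzmem : fl (n₀ * (a / m)) ∈ Nset I fl (a / m) := ⟨n₀, hn₀I, hn₀0, rfl⟩
    rw [hN] at hzmem
    obtain ⟨c, hcI, hc0, hc1, hc2⟩ := elimN b _ hzmem
    obtain ⟨hb1, hb2⟩ := bnd n₀ a
    have hkey : (n₀ - c) * b = n₀ * a + n₀ * (b - a) - c * b := by ring
    have hgt : b < (n₀ - c) * b := by linarith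
    have hlt : (n₀ - c) * b < 2 * b := by linarith
    have h1k : (1 : F) < n₀ - c := by
      have h1b : 1 * b < (n₀ - c) * b := by linarith
      exact lt_of_mul_lt_mul_right h1b hb0.le
    have h2k := step 1 I.one_mem (n₀ - c) (I.sub_mem hn₀I hcI) h1k
    have h3k : (1 + 1) * b ≤ (n₀ - c) * b := mul_le_mul_of_nonneg_right h2k hb0.le
    have e2b : (1 + 1) * b = 2 * b := by ring
    linarith
  · rcases le_or_gt (2 * m) b with h2b | h2b
    · -- Case 2 : a < 2m ≤ b
      have mem1 : a ∈ Nset I fl (a / m) :=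
        memN a a m haI hmI hm0.le (le_of_eq (by ring))
          (by nlinarith [hm0])
      have mem2 : a + 1 ∈ Nset I fl (a / m) := by
        refine memN a (a + 1) (m + 1) (I.add_mem haI I.one_mem) (I.add_mem hmI I.one_mem)
          (by linarith) ?_ ?_
        · have e1 : (a + 1) * m = a * m + m := by ring
          have e2 : (m + 1) * a = a * m + a := by ring
          linarith
        · have e1 : (a + 1) * m = a * m + m := by ring
          have e2 : (m + 1) * a = a * m + a := by ring
          linarith
      rw [hN] at mem1 mem2
      obtain ⟨c, hcI, hc0, hc1, hc2⟩ := elimN b a mem1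
      obtain ⟨c', hc'I, hc'0, hc'1, hc'2⟩ := elimN b (a + 1) mem2
      have e4 : (a + 1) * m = a * m + m := by ring
      have hcc : c < c' := by
        have hcb : c * b < c' * b := by linarith
        exact lt_of_mul_lt_mul_right hcb hb0.le
      have h5 := step c hcI c' hc'I hcc
      have h6 : (c + 1) * b ≤ c' * b := mul_le_mul_of_nonneg_right h5 hb0.le
      have e5 : (c + 1) * b = c * b + b := by ring
      linarith
    · -- Case 3 : b < 2m
      have hsa1 : (1 : F) ≤ a - m := by have := step m hmI a haI hma; linarith
      have hsb1 : (1 : F) ≤ b - m := by have := step m hmI b hbI hmb; linarith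
      have hsbI : b - m ∈ I := I.sub_mem hbI hmI
      have hD0 : 0 < m * (b - a) := mul_pos hm0 (by linarith)
      have hA00 : 0 < a * (b - m) := mul_pos ha0 (by linarith)
      obtain ⟨k₁, hk₁⟩ :
          ∃ x : F, x = fl ((a * (b - m) + (a - m) * (b - m)) / (m * (b - a))) + 1 := ⟨_, rfl⟩
      have hk₁I : k₁ ∈ I := by rw [hk₁]; exact I.add_mem (flI _) I.one_mem
      obtain ⟨hr1, hr2⟩ := hdiv (a * (b - m) + (a - m) * (b - m)) (m * (b - a)) hD0
      have he : k₁ * (m * (b - a))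
          = fl ((a * (b - m) + (a - m) * (b - m)) / (m * (b - a))) * (m * (b - a))
            + m * (b - a) := by
        rw [hk₁]; ring
      have hk1lb : a * (b - m) + (a - m) * (b - m) < k₁ * (m * (b - a)) := by linarith
      have hk1ub : k₁ * (m * (b - a))
          ≤ a * (b - m) + (a - m) * (b - m) + m * (b - a) := by linarith
      have hM00 : 0 < (a - m) * (b - m) := mul_pos (by linarith) (by linarith)
      have hk₁0 : 0 < k₁ := by
        by_contra hcon
        push_neg at hcon
        have h' : k₁ * (m * (b - a)) ≤ 0 * (m * (b - a)) :=
          mul_le_mul_of_nonneg_right hcon hD0.le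
        rw [zero_mul] at h'
        linarith
      have hk₁1 : (1 : F) ≤ k₁ := by have := step 0 I.zero_mem k₁ hk₁I hk₁0; linarith
      obtain ⟨z, hz⟩ : ∃ x : F, x = fl ((k₁ * b - 1) / (b - m)) := ⟨_, rfl⟩
      have hzI : z ∈ I := by rw [hz]; exact flI _
      obtain ⟨hs1, hs2⟩ := hdiv (k₁ * b - 1) (b - m) (by linarith)
      rw [← hz] at hs1 hs2
      -- hs1 : z * (b - m) ≤ k₁ * b - 1 ; hs2 : k₁ * b - 1 < z * (b - m) + (b - m)
      have he'I : k₁ * b - z * (b - m) ∈ I :=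
        I.sub_mem (I.mul_mem hk₁I hbI) (I.mul_mem hzI hsbI)
      have he'1 : (1 : F) ≤ k₁ * b - z * (b - m) := by linarith
      have he'2 : k₁ * b - z * (b - m) ≤ b - m := by
        by_contra hcon
        push_neg at hcon
        have := step (b - m) hsbI (k₁ * b - z * (b - m)) he'I hcon
        linarith
      have hkb : 1 * b ≤ k₁ * b := mul_le_mul_of_nonneg_right hk₁1 hb0.le
      have hz0 : 0 ≤ z := by
        by_contra hcon
        push_neg at hcon
        have h7 : z + 1 ≤ 0 := by have := step z hzI 0 I.zero_mem hcon; linarith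
        have h8 : z * (b - m) ≤ (-1) * (b - m) :=
          mul_le_mul_of_nonneg_right (by linarith) (by linarith)
        have h9 : m + 1 ≤ b := step m hmI b hbI hmb
        linarith
      have hznb : z ∉ Nset I fl (b / m) := by
        intro hmem'
        obtain ⟨c, hcI, hc0, hc1, hc2⟩ := elimN b z hmem'
        have hwb : (z - k₁) * b = z * m - (k₁ * b - z * (b - m)) := by ring
        have hcw : z - k₁ < c := by
          have h10 : (z - k₁) * b < c * b := by linarith
          exact lt_of_mul_lt_mul_right h10 hb0.le
        have h11 := step (z - k₁) (I.sub_mem hzI hk₁I) c hcI hcw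
        have h12 : ((z - k₁) + 1) * b ≤ c * b := mul_le_mul_of_nonneg_right h11 hb0.le
        have e5 : ((z - k₁) + 1) * b = (z - k₁) * b + b := by ring
        linarith
      have hzna : z ∉ Nset I fl (a / m) := by rw [hN]; exact hznb
      obtain ⟨n₂, hn₂⟩ : ∃ x : F, x = fl (z * m / a) := ⟨_, rfl⟩
      have hn₂I : n₂ ∈ I := by rw [hn₂]; exact flI _
      obtain ⟨ht1, ht2⟩ := hdiv (z * m) a ha0
      rw [← hn₂] at ht1 ht2
      have hzm0 : 0 ≤ z * m := mul_nonneg hz0 hm0.le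
      have hn₂0 : 0 ≤ n₂ := by
        by_contra hcon
        push_neg at hcon
        have h7 : n₂ + 1 ≤ 0 := by have := step n₂ hn₂I 0 I.zero_mem hcon; linarith
        have h8 : (n₂ + 1) * a ≤ 0 * a := mul_le_mul_of_nonneg_right h7 ha0.le
        rw [zero_mul] at h8
        have e6 : (n₂ + 1) * a = n₂ * a + a := by ring
        linarith
      have he₀I : z * m - n₂ * a ∈ I := I.sub_mem (I.mul_mem hzI hmI) (I.mul_mem hn₂I haI)
      have he₀1 : (1 : F) ≤ z * m - n₂ * a := by
        rcases eq_or_lt_of_le (by linarith : (0:F) ≤ z * m - n₂ * a) with heq | hlt'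
        · exfalso
          exact hzna (memN a z n₂ hzI hn₂I hn₂0 (by linarith) (by linarith))
        · have := step 0 I.zero_mem _ he₀I hlt'
          linarith
      have he₀2 : z * m - n₂ * a ≤ a - m := by
        by_contra hcon
        push_neg at hcon
        apply hzna
        refine memN a z (n₂ + 1) hzI (I.add_mem hn₂I I.one_mem) (by linarith) ?_ ?_
        · have e6 : (n₂ + 1) * a = n₂ * a + a := by ring
          linarith
        · have e6 : (n₂ + 1) * a = n₂ * a + a := by ring
          linarith
      have hkI : k₁ - (z - n₂) ∈ I := I.sub_mem hk₁I (I.sub_mem hzI hn₂I)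
      have hkey : (k₁ - (z - n₂)) * (a * (b - m))
          = k₁ * (m * (b - a)) - (z * m - n₂ * a) * (b - m)
            + (k₁ * b - z * (b - m)) * (a - m) := by
        ring
      have hbnd1 : (z * m - n₂ * a) * (b - m) ≤ (a - m) * (b - m) :=
        mul_le_mul_of_nonneg_right he₀2 (by linarith only [hsb1])
      have hbnd2 : 1 * (b - m) ≤ (z * m - n₂ * a) * (b - m) :=
        mul_le_mul_of_nonneg_right he₀1 (by linarith only [hsb1])
      have hbnd3 : 1 * (a - m) ≤ (k₁ * b - z * (b - m)) * (a - m) :=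
        mul_le_mul_of_nonneg_right he'1 (by linarith only [hsa1])
      have hbnd4 : (k₁ * b - z * (b - m)) * (a - m) ≤ (b - m) * (a - m) :=
        mul_le_mul_of_nonneg_right he'2 (by linarith only [hsa1])
      have hident : a * (b - m) - 2 * ((a - m) * (b - m)) - m * (b - a)
          = (a - m) * (2 * m - b) := by ring
      have hslack : 0 ≤ (a - m) * (2 * m - b) :=
        mul_nonneg (by linarith only [hsa1]) (by linarith only [h2b])
      have ecomm : (b - m) * (a - m) = (a - m) * (b - m) := by ring
      have hgtA : a * (b - m) < (k₁ - (z - n₂)) * (a * (b - m)) := by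
        linarith only [hkey, hk1lb, hbnd1, hbnd3, hsa1]
      have hltA : (k₁ - (z - n₂)) * (a * (b - m)) < 2 * (a * (b - m)) := by
        linarith only [hkey, hk1ub, hbnd2, hbnd4, ecomm, hident, hslack, hsb1]
      have h1k : (1 : F) < k₁ - (z - n₂) := by
        have h1b : 1 * (a * (b - m)) < (k₁ - (z - n₂)) * (a * (b - m)) := by
          linarith only [hgtA]
        exact lt_of_mul_lt_mul_right h1b hA00.le
      have h2k := step 1 I.one_mem _ hkI h1k
      have h3k : (1 + 1) * (a * (b - m)) ≤ (k₁ - (z - n₂)) * (a * (b - m)) :=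
        mul_le_mul_of_nonneg_right h2k hA00.le
      have e2b : (1 + 1) * (a * (b - m)) = 2 * (a * (b - m)) := by ring
      linarith only [h3k, e2b, hltA]

theorem stmt_7 {F : Type*} [Field F] [LinearOrder F] [IsStrictOrderedRing F] (I : Subring F) (fl : F → F)
    (hdisc : ∀ x ∈ I, ¬(0 < x ∧ x < 1))
    (hfl : ∀ x : F, fl x ∈ I ∧ fl x ≤ x ∧ x < fl x + 1)
    (α β : F) (hα1 : 1 < α) (hβ1 : 1 < β)
    (hαrat : IsRat I α) (hβrat : IsRat I β) (hne : α ≠ β) :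
    Nset I fl α ≠ Nset I fl β := by
  intro hEq
  obtain ⟨p, hpI, q, hqI, hq0, hαpq⟩ := hαrat
  obtain ⟨r, hrI, s, hsI, hs0, hβrs⟩ := hβrat
  have hqs : q * s ≠ 0 := mul_ne_zero hq0 hs0
  obtain ⟨m, hmI, hm0, haI', hbI'⟩ :
      ∃ m : F, m ∈ I ∧ 0 < m ∧ m * α ∈ I ∧ m * β ∈ I := by
    rcases lt_or_gt_of_ne hqs with hneg | hpos
    · refine ⟨-(q * s), I.neg_mem (I.mul_mem hqI hsI), by linarith, ?_, ?_⟩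
      · have e : -(q * s) * α = -(s * p) := by rw [hαpq]; field_simp
        rw [e]; exact I.neg_mem (I.mul_mem hsI hpI)
      · have e : -(q * s) * β = -(q * r) := by rw [hβrs]; field_simp
        rw [e]; exact I.neg_mem (I.mul_mem hqI hrI)
    · refine ⟨q * s, I.mul_mem hqI hsI, hpos, ?_, ?_⟩
      · have e : (q * s) * α = s * p := by rw [hαpq]; field_simp
        rw [e]; exact I.mul_mem hsI hpI
      · have e : (q * s) * β = q * r := by rw [hβrs]; field_simp
        rw [e]; exact I.mul_mem hqI hrI
  have hm' : m ≠ 0 := ne_of_gt hm0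
  have hαeq : α = m * α / m := (mul_div_cancel_left₀ α hm').symm
  have hβeq : β = m * β / m := (mul_div_cancel_left₀ β hm').symm
  have hma : m < m * α := by
    have := mul_lt_mul_of_pos_left hα1 hm0
    simpa using this
  have hmb : m < m * β := by
    have := mul_lt_mul_of_pos_left hβ1 hm0
    simpa using this
  have hne' : m * α ≠ m * β := fun h => hne (mul_left_cancel₀ hm' h)
  rw [hαeq, hβeq] at hEq
  rcases hne'.lt_or_gt with hlt | hlt
  · exact key_lemma I fl hdisc hfl m (m * α) (m * β) hmI haI' hbI' hm0 hma hlt hEq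
  · exact key_lemma I fl hdisc hfl m (m * β) (m * α) hmI hbI' haI' hm0 hmb hlt hEq.symm
end

section
/- Let F be a linearly ordered field with integer part I, let α, β ∈ F be distinct irrationals with α, β > 1, and let a, b ∈ I^{≥0} be such that a·(1 − α^{−1}) + b·(1 − β^{−1}) = 1. Then N_α ∪ N_β = I^{≥0}. -/
section Aux

/-!
Suppose `m ≥ 0` lies in neither `N_α` nor `N_β`, and let `k = ⌊(m + 1)/α⌋`. Irrationality of `α`
makes `k α < m + 1` strict, and as `⌊k α⌋ ≠ m` this forces `k α < m`; so
`k < m α⁻¹` and `(m + 1) α⁻¹ < k + 1`, and similarly for some `l` and `β`. Irrationality also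
forces `a, b > 0`, and `a α⁻¹ + b β⁻¹ = a + b - 1`, so weighting these inequalities by `a` and `b`
traps the element `m (a + b - 1) - (a k + b l)` of `I` strictly between `0` and `1`.
-/

section IntegerPart

variable {F : Type*} [Field F] [LinearOrder F] [IsStrictOrderedRing F] {I : Subring F}
  {fl : F → F}

lemma le_of_lt_add_one_of_mem (hdisc : ∀ x ∈ I, ¬(0 < x ∧ x < 1)) {x y : F}
    (hx : x ∈ I) (hy : y ∈ I) (hxy : x < y + 1) : x ≤ y := by
  by_contra! h
  exact hdisc (x - y) (sub_mem hx hy) ⟨by linarith, by linarith⟩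

lemma fl_eq_of_le_of_lt (hdisc : ∀ x ∈ I, ¬(0 < x ∧ x < 1))
    (hfl : ∀ x : F, fl x ∈ I ∧ fl x ≤ x ∧ x < fl x + 1) {x y : F} (hy : y ∈ I)
    (hyx : y ≤ x) (hxy : x < y + 1) : fl x = y := by
  obtain ⟨hflI, hflx, hxfl⟩ := hfl x
  exact le_antisymm (le_of_lt_add_one_of_mem hdisc hflI hy (by linarith))
    (le_of_lt_add_one_of_mem hdisc hy hflI (by linarith))

lemma fl_nonneg (hdisc : ∀ x ∈ I, ¬(0 < x ∧ x < 1))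
    (hfl : ∀ x : F, fl x ∈ I ∧ fl x ≤ x ∧ x < fl x + 1) {x : F} (hx : 0 ≤ x) : 0 ≤ fl x := by
  obtain ⟨hflI, -, hxfl⟩ := hfl x
  exact le_of_lt_add_one_of_mem hdisc I.zero_mem hflI (by linarith)

lemma Nset_subset_Inonneg (hdisc : ∀ x ∈ I, ¬(0 < x ∧ x < 1))
    (hfl : ∀ x : F, fl x ∈ I ∧ fl x ≤ x ∧ x < fl x + 1) {γ : F} (hγ : 0 ≤ γ) :
    Nset I fl γ ⊆ Inonneg I := by
  rintro _ ⟨n, -, hn, rfl⟩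
  exact ⟨(hfl _).1, fl_nonneg hdisc hfl (mul_nonneg hn hγ)⟩

lemma IsRat.of_div_eq {p q γ : F} (hp : p ∈ I) (hq : q ∈ I) (hqγ : q ≠ 0) (h : p / γ = q) :
    IsRat I γ := by
  have hγ : γ ≠ 0 := by
    rintro rfl
    exact hqγ (by simpa using h.symm)
  exact ⟨p, hp, q, hq, hqγ, by rw [eq_div_iff hqγ, ← h, mul_div_cancel₀ _ hγ]⟩

lemma mul_one_sub_inv_ne_one {c γ : F} (hc : c ∈ I) (hγ : ¬IsRat I γ) :
    c * (1 - γ⁻¹) ≠ 1 := by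
  intro h
  have hγ0 : γ ≠ 0 := by
    rintro rfl
    exact hγ ⟨0, I.zero_mem, 1, I.one_mem, one_ne_zero, by simp⟩
  field_simp at h
  have hc1 : c - 1 ≠ 0 := by
    rintro hc1
    obtain rfl : c = 1 := by linarith
    linarith
  refine hγ ⟨c, hc, c - 1, sub_mem hc I.one_mem, hc1, ?_⟩
  rw [eq_div_iff hc1]
  linear_combination h

lemma exists_lt_mul_inv_of_notMem_Nset (hdisc : ∀ x ∈ I, ¬(0 < x ∧ x < 1))
    (hfl : ∀ x : F, fl x ∈ I ∧ fl x ≤ x ∧ x < fl x + 1) {γ : F} (hγ : 0 < γ)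
    (hirr : ¬IsRat I γ) {m : F} (hmI : m ∈ I) (hm : 0 ≤ m) (hmγ : m ∉ Nset I fl γ) :
    ∃ k ∈ I, k < m * γ⁻¹ ∧ (m + 1) * γ⁻¹ < k + 1 := by
  obtain ⟨hkI, hk_le, htk⟩ := hfl ((m + 1) / γ)
  set k := fl ((m + 1) / γ)
  have hk : 0 ≤ k := fl_nonneg hdisc hfl (by positivity)
  have hkt : k < (m + 1) / γ := hk_le.lt_of_ne fun h =>
    hirr (.of_div_eq (add_mem hmI I.one_mem) hkI (h ▸ by positivity) h.symm)
  have hkγ : k * γ < m := by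
    by_contra! hmk
    exact hmγ ⟨k, hkI, hk, (fl_eq_of_le_of_lt hdisc hfl hmI hmk (by
      rwa [lt_div_iff₀ hγ] at hkt)).symm⟩
  refine ⟨k, hkI, ?_, by rwa [← div_eq_mul_inv]⟩
  rwa [← div_eq_mul_inv, lt_div_iff₀ hγ]

end IntegerPart

theorem stmt_9_general {F : Type*} [Field F] [LinearOrder F] [IsStrictOrderedRing F] (I : Subring F) (fl : F → F)
    (hdisc : ∀ x ∈ I, ¬(0 < x ∧ x < 1))
    (hfl : ∀ x : F, fl x ∈ I ∧ fl x ≤ x ∧ x < fl x + 1)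
    (α β : F) (hα1 : 1 < α) (hβ1 : 1 < β)
    (hαirr : ¬ IsRat I α) (hβirr : ¬ IsRat I β)
    (a b : F) (ha : a ∈ I) (hb : b ∈ I) (ha0 : 0 ≤ a) (hb0 : 0 ≤ b)
    (hab : a * (1 - α⁻¹) + b * (1 - β⁻¹) = 1) :
    Nset I fl α ∪ Nset I fl β = Inonneg I := by
  refine (Set.union_subset (Nset_subset_Inonneg hdisc hfl (by linarith))
    (Nset_subset_Inonneg hdisc hfl (by linarith))).antisymm ?_
  rintro m ⟨hmI, hm⟩
  by_contra! hmN
  simp only [Set.mem_union, not_or] at hmN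
  obtain ⟨k, hkI, hkm, hmk⟩ :=
    exists_lt_mul_inv_of_notMem_Nset hdisc hfl (by linarith) hαirr hmI hm hmN.1
  obtain ⟨l, hlI, hlm, hml⟩ :=
    exists_lt_mul_inv_of_notMem_Nset hdisc hfl (by linarith) hβirr hmI hm hmN.2
  have ha_pos : 0 < a := ha0.lt_of_ne fun h =>
    mul_one_sub_inv_ne_one hb hβirr (by simpa [← h] using hab)
  have hb_pos : 0 < b := hb0.lt_of_ne fun h =>
    mul_one_sub_inv_ne_one ha hαirr (by simpa [← h] using hab)
  have hsum : a * α⁻¹ + b * β⁻¹ = a + b - 1 := by linear_combination -hab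
  refine hdisc (m * (a + b - 1) - (a * k + b * l)) ?_ ⟨?_, ?_⟩
  · exact sub_mem (mul_mem hmI (sub_mem (add_mem ha hb) I.one_mem))
      (add_mem (mul_mem ha hkI) (mul_mem hb hlI))
  · linear_combination mul_lt_mul_of_pos_left hkm ha_pos + mul_lt_mul_of_pos_left hlm hb_pos
      + m * hsum
  · linear_combination mul_lt_mul_of_pos_left hmk ha_pos + mul_lt_mul_of_pos_left hml hb_pos
      - (m + 1) * hsum

theorem stmt_9 {F : Type*} [Field F] [LinearOrder F] [IsStrictOrderedRing F] (I : Subring F) (fl : F → F)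
    (hdisc : ∀ x ∈ I, ¬(0 < x ∧ x < 1))
    (hfl : ∀ x : F, fl x ∈ I ∧ fl x ≤ x ∧ x < fl x + 1)
    (α β : F) (hα1 : 1 < α) (hβ1 : 1 < β)
    (hαirr : ¬ IsRat I α) (hβirr : ¬ IsRat I β) (hne : α ≠ β)
    (a b : F) (ha : a ∈ I) (hb : b ∈ I) (ha0 : 0 ≤ a) (hb0 : 0 ≤ b)
    (hab : a * (1 - α⁻¹) + b * (1 - β⁻¹) = 1) :
    Nset I fl α ∪ Nset I fl β = Inonneg I :=
  stmt_9_general I fl hdisc hfl α β hα1 hβ1 hαirr hβirr a b ha hb ha0 hb0 hab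
end Aux
end

section
/- Let F be a linearly ordered field with integer part I, let α, β ∈ F be distinct irrationals with α, β > 1, and let a, b, c, d ∈ I^{≥0} be such that a·α^{−1} + b·β^{−1} = 1 and c·(1 − α^{−1}) + d·(1 − β^{−1}) = 1. Then a = b = c = d = 1, and consequently α^{−1} + β^{−1} = 1. -/
/-!
Discreteness of `I` forces each nonnegative coefficient to be `0` or `≥ 1`, and none can be `0`:
if, say, `a = 0` then `β⁻¹ = 1 / b`, and if `c = 0` then `1 - β⁻¹ = 1 / d`, either way making `β`
rational. Adding the two relations, `(a - 1) α⁻¹ + (b - 1) β⁻¹ + (c - 1)(1 - α⁻¹) + (d - 1)(1 - β⁻¹) = 0`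
is a sum of nonnegative terms with positive weights, so every coefficient equals `1`.
-/

theorem one_le_of_mem_of_ne_zero {R : Type*} [Ring R] [LinearOrder R] {I : Subring R}
    (hdisc : ∀ x ∈ I, ¬(0 < x ∧ x < 1)) {x : R} (hx : x ∈ I) (hx0 : 0 ≤ x) (hne : x ≠ 0) :
    1 ≤ x :=
  not_lt.1 fun h => hdisc x hx ⟨lt_of_le_of_ne hx0 (Ne.symm hne), h⟩

section IsRat

variable {F : Type*} [Field F] [LinearOrder F] [IsStrictOrderedRing F] {I : Subring F}

theorem IsRat.inv {x : F} (hx : IsRat I x) : IsRat I x⁻¹ := by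
  obtain ⟨p, hp, q, hq, hq0, rfl⟩ := hx
  by_cases hp0 : p = 0
  · exact ⟨0, I.zero_mem, 1, I.one_mem, one_ne_zero, by simp [hp0]⟩
  · exact ⟨q, hq, p, hp, hp0, inv_div p q⟩

theorem IsRat.one_sub {x : F} (hx : IsRat I x) : IsRat I (1 - x) := by
  obtain ⟨p, hp, q, hq, hq0, rfl⟩ := hx
  exact ⟨q - p, I.sub_mem hq hp, q, hq, hq0, by rw [sub_div, div_self hq0]⟩

theorem isRat_of_mul_eq_one {n x : F} (hn : n ∈ I) (h : n * x = 1) : IsRat I x :=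
  ⟨1, I.one_mem, n, hn, left_ne_zero_of_mul_eq_one h, eq_one_div_of_mul_eq_one_right h⟩

theorem isRat_of_mul_inv_eq_one {n x : F} (hn : n ∈ I) (h : n * x⁻¹ = 1) : IsRat I x := by
  simpa using (isRat_of_mul_eq_one hn h).inv

theorem isRat_of_mul_one_sub_inv_eq_one {n x : F} (hn : n ∈ I) (h : n * (1 - x⁻¹) = 1) :
    IsRat I x := by
  simpa using (isRat_of_mul_eq_one hn h).one_sub.inv

end IsRat

theorem coeffs_eq_one_of_mul_add_mul_eq_one {R : Type*} [CommRing R] [LinearOrder R]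
    [IsStrictOrderedRing R] {u v a b c d : R} (hu0 : 0 < u) (hu1 : u < 1)
    (hv0 : 0 < v) (hv1 : v < 1) (ha : 1 ≤ a) (hb : 1 ≤ b) (hc : 1 ≤ c) (hd : 1 ≤ d)
    (hab : a * u + b * v = 1) (hcd : c * (1 - u) + d * (1 - v) = 1) :
    a = 1 ∧ b = 1 ∧ c = 1 ∧ d = 1 := by
  refine ⟨?_, ?_, ?_, ?_⟩ <;> nlinarith

theorem stmt_11_general {F : Type*} [Field F] [LinearOrder F] [IsStrictOrderedRing F] (I : Subring F)
    (hdisc : ∀ x ∈ I, ¬(0 < x ∧ x < 1))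
    (α β : F) (hα1 : 1 < α) (hβ1 : 1 < β)
    (hαirr : ¬ IsRat I α) (hβirr : ¬ IsRat I β)
    (a b c d : F) (ha : a ∈ I) (hb : b ∈ I) (hc : c ∈ I) (hd : d ∈ I)
    (ha0 : 0 ≤ a) (hb0 : 0 ≤ b) (hc0 : 0 ≤ c) (hd0 : 0 ≤ d)
    (hab : a * α⁻¹ + b * β⁻¹ = 1)
    (hcd : c * (1 - α⁻¹) + d * (1 - β⁻¹) = 1) :
    a = 1 ∧ b = 1 ∧ c = 1 ∧ d = 1 ∧ α⁻¹ + β⁻¹ = 1 := by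
  have ha1 : 1 ≤ a := one_le_of_mem_of_ne_zero hdisc ha ha0 <| by
    rintro rfl
    exact hβirr (isRat_of_mul_inv_eq_one hb (by simpa using hab))
  have hb1 : 1 ≤ b := one_le_of_mem_of_ne_zero hdisc hb hb0 <| by
    rintro rfl
    exact hαirr (isRat_of_mul_inv_eq_one ha (by simpa using hab))
  have hc1 : 1 ≤ c := one_le_of_mem_of_ne_zero hdisc hc hc0 <| by
    rintro rfl
    exact hβirr (isRat_of_mul_one_sub_inv_eq_one hd (by simpa using hcd))
  have hd1 : 1 ≤ d := one_le_of_mem_of_ne_zero hdisc hd hd0 <| by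
    rintro rfl
    exact hαirr (isRat_of_mul_one_sub_inv_eq_one hc (by simpa using hcd))
  obtain ⟨rfl, rfl, rfl, rfl⟩ :=
    coeffs_eq_one_of_mul_add_mul_eq_one
      (inv_pos.2 (zero_lt_one.trans hα1)) (inv_lt_one_of_one_lt₀ hα1)
      (inv_pos.2 (zero_lt_one.trans hβ1)) (inv_lt_one_of_one_lt₀ hβ1) ha1 hb1 hc1 hd1 hab hcd
  exact ⟨rfl, rfl, rfl, rfl, by simpa using hab⟩

theorem stmt_11 {F : Type*} [Field F] [LinearOrder F] [IsStrictOrderedRing F] (I : Subring F) (fl : F → F)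
    (hdisc : ∀ x ∈ I, ¬(0 < x ∧ x < 1))
    (hfl : ∀ x : F, fl x ∈ I ∧ fl x ≤ x ∧ x < fl x + 1)
    (α β : F) (hα1 : 1 < α) (hβ1 : 1 < β)
    (hαirr : ¬ IsRat I α) (hβirr : ¬ IsRat I β) (hne : α ≠ β)
    (a b c d : F) (ha : a ∈ I) (hb : b ∈ I) (hc : c ∈ I) (hd : d ∈ I)
    (ha0 : 0 ≤ a) (hb0 : 0 ≤ b) (hc0 : 0 ≤ c) (hd0 : 0 ≤ d)
    (hab : a * α⁻¹ + b * β⁻¹ = 1)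
    (hcd : c * (1 - α⁻¹) + d * (1 - β⁻¹) = 1) :
    a = 1 ∧ b = 1 ∧ c = 1 ∧ d = 1 ∧ α⁻¹ + β⁻¹ = 1 :=
  stmt_11_general I hdisc α β hα1 hβ1 hαirr hβirr a b c d ha hb hc hd ha0 hb0 hc0 hd0 hab hcd
end

section
/- Let F be a linearly ordered field with integer part I, let ρ ∈ F be rational with ρ ≥ 1, and let m ∈ I^{>0} be such that mρ ∈ I. If α ∈ F satisfies 0 < α − ρ < 1/m², then ⌊lα⌋ = ⌊lρ⌋ for every l ∈ I with 0 ≤ l ≤ m; in particular N_ρ and N_α contain the same elements below m. (This is the quantitative core of the theorem asserting that for any descending sequence of irrationals converging to ρ, the sets N_{α_γ} eventually agree with N_ρ on any prescribed initial segment.) -/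
/-!
Write `b = ⌊lρ⌋`. Since `m(lρ - b) = l(mρ) - mb` lies in `I` and is `< m`, discreteness gives
`m(lρ - b) ≤ m - 1`. Hence `m(lα - b) ≤ m - 1 + lm(α - ρ) ≤ m - 1 + m²(α - ρ) < m`, so
`b ≤ lρ ≤ lα < b + 1`, and `⌊lα⌋ = b` by uniqueness of the integer part.
-/

section IntegerPart

variable {R : Type*} [CommRing R] [LinearOrder R] [IsStrictOrderedRing R] {I : Subring R}

theorem le_sub_one_of_mem_of_lt (hdisc : ∀ x ∈ I, ¬(0 < x ∧ x < 1)) {x n : R}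
    (hx : x ∈ I) (hn : n ∈ I) (h : x < n) : x ≤ n - 1 := by
  have : ¬(n - x < 1) := fun h' => hdisc _ (I.sub_mem hn hx) ⟨sub_pos.mpr h, h'⟩
  linarith

theorem eq_of_mem_of_sub_lt_one (hdisc : ∀ x ∈ I, ¬(0 < x ∧ x < 1)) {a b : R}
    (ha : a ∈ I) (hb : b ∈ I) (hab : a - b < 1) (hba : b - a < 1) : a = b := by
  have h₁ := le_sub_one_of_mem_of_lt hdisc ha (I.add_mem hb I.one_mem) (by linarith)
  have h₂ := le_sub_one_of_mem_of_lt hdisc hb (I.add_mem ha I.one_mem) (by linarith)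
  exact le_antisymm (by linarith) (by linarith)

variable {fl : R → R} (hfl : ∀ x : R, fl x ∈ I ∧ fl x ≤ x ∧ x < fl x + 1)
include hfl

theorem fl_eq_of_le_of_lt_s12 (hdisc : ∀ x ∈ I, ¬(0 < x ∧ x < 1)) {x a : R}
    (ha : a ∈ I) (hax : a ≤ x) (hxa : x < a + 1) : fl x = a := by
  obtain ⟨hmem, hle, hlt⟩ := hfl x
  exact eq_of_mem_of_sub_lt_one hdisc hmem ha (by linarith) (by linarith)

theorem mul_sub_fl_le_sub_one (hdisc : ∀ x ∈ I, ¬(0 < x ∧ x < 1)) {m y : R}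
    (hm : m ∈ I) (hm0 : 0 < m) (hmy : m * y ∈ I) : m * (y - fl y) ≤ m - 1 := by
  obtain ⟨hmem, -, hlt⟩ := hfl y
  refine le_sub_one_of_mem_of_lt hdisc ?_ hm ?_
  · rw [mul_sub]
    exact I.sub_mem hmy (I.mul_mem hm hmem)
  · nlinarith

end IntegerPart

theorem stmt_12_general {F : Type*} [Field F] [LinearOrder F] [IsStrictOrderedRing F] (I : Subring F) (fl : F → F)
    (hdisc : ∀ x ∈ I, ¬(0 < x ∧ x < 1))
    (hfl : ∀ x : F, fl x ∈ I ∧ fl x ≤ x ∧ x < fl x + 1)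
    (ρ : F)
    (m : F) (hm : m ∈ I) (hm0 : 0 < m) (hmρ : m * ρ ∈ I)
    (α : F) (h1 : 0 < α - ρ) (h2 : α - ρ < 1 / m ^ 2) :
    ∀ l ∈ I, 0 ≤ l → l ≤ m → fl (l * α) = fl (l * ρ) := by
  intro l hl hl0 hlm
  obtain ⟨hb, hbρ, -⟩ := hfl (l * ρ)
  have hfrac : m * (l * ρ - fl (l * ρ)) ≤ m - 1 :=
    mul_sub_fl_le_sub_one hfl hdisc hm hm0 (by rw [mul_left_comm]; exact I.mul_mem hl hmρ)
  have hgap : m ^ 2 * (α - ρ) < 1 := by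
    rwa [lt_div_iff₀ (by positivity), mul_comm] at h2
  have hdev : m * l * (α - ρ) ≤ m ^ 2 * (α - ρ) := by
    rw [sq]; gcongr
  have hρα : l * ρ ≤ l * α := mul_le_mul_of_nonneg_left (by linarith) hl0
  refine fl_eq_of_le_of_lt_s12 hfl hdisc hb (hbρ.trans hρα) ?_
  have : m * (l * α - fl (l * ρ)) < m * 1 := by linarith
  linarith [lt_of_mul_lt_mul_left this hm0.le]

theorem stmt_12 {F : Type*} [Field F] [LinearOrder F] [IsStrictOrderedRing F] (I : Subring F) (fl : F → F)
    (hdisc : ∀ x ∈ I, ¬(0 < x ∧ x < 1))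
    (hfl : ∀ x : F, fl x ∈ I ∧ fl x ≤ x ∧ x < fl x + 1)
    (ρ : F) (hρrat : IsRat I ρ) (hρ1 : 1 ≤ ρ)
    (m : F) (hm : m ∈ I) (hm0 : 0 < m) (hmρ : m * ρ ∈ I)
    (α : F) (h1 : 0 < α - ρ) (h2 : α - ρ < 1 / m ^ 2) :
    ∀ l ∈ I, 0 ≤ l → l ≤ m → fl (l * α) = fl (l * ρ) :=
  stmt_12_general I fl hdisc hfl ρ m hm hm0 hmρ α h1 h2
end

section
/- Let F be a linearly ordered field with integer part I, where I is Bézout, and let ρ, σ ∈ F be rationals with ρ, σ > 1. If N_ρ ⊆ N_σ, then there exist a, b ∈ I^{≥0} such that a·ρ^{−1} + b·(1 − σ^{−1}) = 1. -/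
/-- `I` is Bézout: for all nonzero `m, n ∈ I` there are `r, s ∈ I` with
`r·m + s·n ≥ 1` and `r·m + s·n` dividing both `m` and `n` (in `I`). -/
def IsBezoutIP {F : Type*} [Field F] [LinearOrder F] [IsStrictOrderedRing F] (I : Subring F) : Prop :=
  ∀ m ∈ I, ∀ n ∈ I, m ≠ 0 → n ≠ 0 →
    ∃ r ∈ I, ∃ s ∈ I, 1 ≤ r * m + s * n ∧
      (∃ u ∈ I, m = (r * m + s * n) * u) ∧ (∃ v ∈ I, n = (r * m + s * n) * v)

section DiscreteBezout

variable {R : Type*} [CommRing R] [LinearOrder R] [IsStrictOrderedRing R]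

/-- `M ∈ N_{p/q}`, i.e. `M = ⌊n p / q⌋` for some `n ≥ 0`. -/
def IsBeattyValue (p q M : R) : Prop :=
  ∃ n, 0 ≤ n ∧ 0 ≤ n * p - M * q ∧ n * p - M * q < q

theorem IsBezout.exists_pos_gcd [IsBezout R] {x : R} (y : R) (hx : x ≠ 0) :
    ∃ d, 0 < d ∧ d ∣ x ∧ d ∣ y ∧ ∃ u v, u * x + v * y = d := by
  obtain ⟨u, v, huv⟩ := IsBezout.gcd_eq_sum x y
  have hg : IsBezout.gcd x y ≠ 0 := fun h =>
    hx (zero_dvd_iff.mp (h ▸ IsBezout.gcd_dvd_left x y))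
  refine ⟨|IsBezout.gcd x y|, abs_pos.mpr hg, (abs_dvd _ _).mpr (IsBezout.gcd_dvd_left x y),
    (abs_dvd _ _).mpr (IsBezout.gcd_dvd_right x y), ?_⟩
  rcases abs_choice (IsBezout.gcd x y) with h | h
  · exact ⟨u, v, by rw [h, huv]⟩
  · exact ⟨-u, -v, by rw [h, ← huv]; ring⟩

theorem not_isBeattyValue_of_mul_eq (hdisc : ∀ x : R, 0 < x → 1 ≤ x) {s t M K a : R}
    (hM : t * M = s * K + a) (ha : 0 < a) (hat : a + t ≤ s) : ¬IsBeattyValue s t M := by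
  rintro ⟨n, -, h₁, h₂⟩
  have hlo : 0 < s * (n - K) := by linarith
  have hhi : s * (n - K) < s := by linarith
  have hs : 0 < s := hlo.trans hhi
  have hnK : 1 ≤ n - K := hdisc _ (pos_of_mul_pos_right hlo hs.le)
  nlinarith

theorem exists_isBeattyValue_mul_eq (hdisc : ∀ x : R, 0 < x → 1 ≤ x) {p q s t d a b : R}
    (hq : 0 < q) (hs : 0 < s) (hpq : IsCoprime p q) (hst : IsCoprime s t) (hdp : d ∣ p)
    (hd : ∃ u v, u * p + v * s = d) (hb : 0 ≤ b) (hbq : b < q) (hdab : d ∣ q * a + t * b) :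
    ∃ M K, IsBeattyValue p q M ∧ t * M = s * K + a := by
  obtain ⟨α, β, hαβ⟩ := hpq
  obtain ⟨s', t', ht'⟩ := hst
  obtain ⟨u, v, huv⟩ := hd
  have hdq : IsCoprime d q := IsCoprime.of_isCoprime_of_dvd_left ⟨α, β, hαβ⟩ hdp
  obtain ⟨m, hm⟩ : d ∣ a + t * β * b := by
    refine hdq.dvd_of_dvd_mul_right ?_
    have : (a + t * β * b) * q = (q * a + t * b) - t * b * α * p := by
      linear_combination t * b * hαβ
    rw [this]
    exact dvd_sub hdab (dvd_mul_of_dvd_right hdp _)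
  set n₀ := α * b + u * m * t' * q
  set M₀ := -(β * b) + u * m * t' * p
  set K₀ := -(u * p * m * s' + v * m)
  have hn₀ : n₀ * p - M₀ * q = b := by linear_combination b * hαβ
  have hM₀ : t * M₀ = s * K₀ + a := by
    linear_combination (u * p * m) * ht' + m * huv - hm
  -- shifting `n₀` by a multiple of `s * q` keeps both equations and makes it nonnegative
  set j := |n₀|
  have hsq : 1 ≤ s * q := hdisc _ (mul_pos hs hq)
  have hn : 0 ≤ n₀ + j * (s * q) := by
    nlinarith [neg_abs_le n₀, abs_nonneg n₀]
  refine ⟨M₀ + j * s * p, K₀ + j * t * p, ⟨n₀ + j * (s * q), hn, ?_, ?_⟩, ?_⟩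
  · linarith
  · linarith
  · linear_combination hM₀

theorem not_dvd_of_isBeattyValue_subset (hdisc : ∀ x : R, 0 < x → 1 ≤ x) {p q s t d a b : R}
    (hsub : ∀ M, IsBeattyValue p q M → IsBeattyValue s t M) (hq : 0 < q) (hs : 0 < s)
    (hpq : IsCoprime p q) (hst : IsCoprime s t) (hdp : d ∣ p) (hd : ∃ u v, u * p + v * s = d)
    (ha : 0 < a) (hat : a + t ≤ s) (hb : 0 ≤ b) (hbq : b < q) : ¬d ∣ q * a + t * b := by
  intro hdab
  obtain ⟨M, K, hMpq, hM⟩ := exists_isBeattyValue_mul_eq hdisc hq hs hpq hst hdp hd hb hbq hdab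
  exact not_isBeattyValue_of_mul_eq hdisc hM ha hat (hsub M hMpq)

theorem isCoprime_sub_of_isBeattyValue_subset [IsBezout R] (hdisc : ∀ x : R, 0 < x → 1 ≤ x)
    {p q s t d : R} (hsub : ∀ M, IsBeattyValue p q M → IsBeattyValue s t M) (hq : 0 < q)
    (hs : 0 < s) (hts : t < s) (hpq : IsCoprime p q) (hst : IsCoprime s t) (hdp : d ∣ p)
    (hds : d ∣ s) (hd : ∃ u v, u * p + v * s = d) : IsCoprime q (s - t) := by
  obtain ⟨h, hh, ⟨b, hb⟩, ⟨a, ha⟩, u, v, huv⟩ := IsBezout.exists_pos_gcd (s - t) hq.ne'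
  rcases (hdisc h hh).eq_or_lt with h1 | h1
  · exact ⟨u, v, by rw [huv, h1]⟩
  have h2 : 2 ≤ h := by linarith [hdisc (h - 1) (by linarith)]
  have ha0 : 0 < a := pos_of_mul_pos_right (ha ▸ sub_pos.mpr hts) hh.le
  have hb0 : 0 < b := pos_of_mul_pos_right (hb ▸ hq) hh.le
  -- `(s - t) / h` and `q / h` would be a forbidden pair
  refine absurd ?_ (not_dvd_of_isBeattyValue_subset (a := a) (b := b) hdisc hsub hq hs hpq hst
    hdp hd ha0 (by nlinarith) hb0.le (by nlinarith))
  have : q * a + t * b = s * b := by linear_combination a * hb - b * ha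
  rw [this]
  exact hds.mul_right b

theorem exists_nonneg_add_eq_of_isBeattyValue_subset [IsBezout R]
    (hdisc : ∀ x : R, 0 < x → 1 ≤ x)
    (hdiv : ∀ x y : R, 0 < y → ∃ k, 0 ≤ x - y * k ∧ x - y * k < y)
    {p q s t d : R} (hsub : ∀ M, IsBeattyValue p q M → IsBeattyValue s t M) (hq : 0 < q)
    (hs : 0 < s) (hts : t < s) (hpq : IsCoprime p q) (hst : IsCoprime s t) (hd0 : 0 < d)
    (hdp : d ∣ p) (hds : d ∣ s) (hd : ∃ u v, u * p + v * s = d) :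
    ∃ x y, 0 ≤ x ∧ 0 ≤ y ∧ q * x + (s - t) * y = d := by
  obtain ⟨u, v, huv⟩ :=
    isCoprime_sub_of_isBeattyValue_subset hdisc hsub hq hs hts hpq hst hdp hds hd
  obtain ⟨k, hk0, hkq⟩ := hdiv (d * v) q hq
  have hxy : q * (d * u + (s - t) * k) + (s - t) * (d * v - q * k) = d := by
    linear_combination d * huv
  refine ⟨d * u + (s - t) * k, d * v - q * k, ?_, hk0, hxy⟩
  by_contra! hx
  refine not_dvd_of_isBeattyValue_subset hdisc hsub hq hs hpq hst hdp hd
    (neg_pos.mpr hx) ?_ hk0 hkq ?_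
  · nlinarith
  · have : q * -(d * u + (s - t) * k) + t * (d * v - q * k) = s * (d * v - q * k) - d := by
      linear_combination -hxy
    rw [this]
    exact (hds.mul_right _).sub dvd_rfl

theorem exists_nonneg_of_isBeattyValue_subset [IsBezout R]
    (hdisc : ∀ x : R, 0 < x → 1 ≤ x)
    (hdiv : ∀ x y : R, 0 < y → ∃ k, 0 ≤ x - y * k ∧ x - y * k < y)
    {p q s t : R} (hp : 0 < p) (hq : 0 < q) (ht : 0 < t) (hts : t < s)
    (hpq : IsCoprime p q) (hst : IsCoprime s t)
    (hsub : ∀ M, IsBeattyValue p q M → IsBeattyValue s t M) :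
    ∃ A B, 0 ≤ A ∧ 0 ≤ B ∧ A * q * s + B * (s - t) * p = p * s := by
  obtain ⟨d, hd0, ⟨P, hP⟩, ⟨s₁, hs₁⟩, hd⟩ := IsBezout.exists_pos_gcd s hp.ne'
  obtain ⟨x, y, hx, hy, hxy⟩ := exists_nonneg_add_eq_of_isBeattyValue_subset hdisc hdiv hsub hq
    (ht.trans hts) hts hpq hst hd0 ⟨P, hP⟩ ⟨s₁, hs₁⟩ hd
  have hP0 : 0 ≤ P := (pos_of_mul_pos_right (hP ▸ hp) hd0.le).le
  have hs₁0 : 0 ≤ s₁ := (pos_of_mul_pos_right (hs₁ ▸ ht.trans hts) hd0.le).le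
  refine ⟨P * x, s₁ * y, mul_nonneg hP0 hx, mul_nonneg hs₁0 hy, ?_⟩
  linear_combination
    (P * s₁ * d) * hxy + (P * x * q - d * P) * hs₁ + (s₁ * y * (s - t) - s) * hP

end DiscreteBezout

theorem Subring.one_le_of_pos {R : Type*} [Ring R] [LinearOrder R] {I : Subring R}
    (hdisc : ∀ x ∈ I, ¬(0 < x ∧ x < 1)) (x : I) (hx : 0 < x) : 1 ≤ x := by
  by_contra! h
  exact hdisc x x.2 ⟨hx, h⟩

section IntegerPart

variable {F : Type*} [Field F] [LinearOrder F] [IsStrictOrderedRing F] {I : Subring F}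

theorem isBezout_of_isBezoutIP (hBez : IsBezoutIP I) : IsBezout I := by
  rw [IsBezout.iff_span_pair_isPrincipal]
  intro x y
  by_cases hx : x = 0
  · exact ⟨y, by rw [hx, Ideal.span_insert_zero]⟩
  by_cases hy : y = 0
  · exact ⟨x, by rw [hy, Ideal.span_pair_comm, Ideal.span_insert_zero]⟩
  obtain ⟨r, hr, s, hs, -, ⟨u, hu, hxu⟩, ⟨v, hv, hyv⟩⟩ :=
    hBez x x.2 y y.2 (by exact_mod_cast hx) (by exact_mod_cast hy)
  refine ⟨⟨⟨r, hr⟩ * x + ⟨s, hs⟩ * y, le_antisymm ?_ ?_⟩⟩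
  · rw [Ideal.span_le, Set.insert_subset_iff, Set.singleton_subset_iff]
    exact ⟨Ideal.mem_span_singleton.mpr ⟨⟨u, hu⟩, Subtype.ext hxu⟩,
      Ideal.mem_span_singleton.mpr ⟨⟨v, hv⟩, Subtype.ext hyv⟩⟩
  · exact (Ideal.span_singleton_le_iff_mem _).mpr (Ideal.mem_span_pair.mpr ⟨_, _, rfl⟩)

variable {fl : F → F}

theorem fl_eq_of_le_of_lt_s13 (hdisc : ∀ x ∈ I, ¬(0 < x ∧ x < 1))
    (hfl : ∀ x : F, fl x ∈ I ∧ fl x ≤ x ∧ x < fl x + 1) {M z : F} (hM : M ∈ I)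
    (h₁ : M ≤ z) (h₂ : z < M + 1) : fl z = M := by
  obtain ⟨hz, hz₁, hz₂⟩ := hfl z
  rcases lt_trichotomy (fl z) M with h | h | h
  · exact absurd ⟨by linarith, by linarith⟩ (hdisc _ (I.sub_mem hM hz))
  · exact h
  · exact absurd ⟨by linarith, by linarith⟩ (hdisc _ (I.sub_mem hz hM))

theorem exists_sub_mul_lt_of_fl (hfl : ∀ x : F, fl x ∈ I ∧ fl x ≤ x ∧ x < fl x + 1)
    (x y : I) (hy : 0 < y) : ∃ k, 0 ≤ x - y * k ∧ x - y * k < y := by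
  obtain ⟨hk, hk₁, hk₂⟩ := hfl (x / y)
  have hy' : (0 : F) < y := hy
  refine ⟨⟨fl (x / y), hk⟩, ?_, ?_⟩
  · have := (le_div_iff₀ hy').mp hk₁
    change (0 : F) ≤ x - y * fl (x / y)
    linarith
  · have := (div_lt_iff₀ hy').mp hk₂
    change (x : F) - y * fl (x / y) < y
    linarith

theorem mem_Nset_div_iff (hdisc : ∀ x ∈ I, ¬(0 < x ∧ x < 1))
    (hfl : ∀ x : F, fl x ∈ I ∧ fl x ≤ x ∧ x < fl x + 1) {p q : I} (hq : 0 < q) (M : I) :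
    (M : F) ∈ Nset I fl (p / q) ↔ IsBeattyValue p q M := by
  have hq' : (0 : F) < q := hq
  constructor
  · rintro ⟨n, hn, hn0, hM⟩
    obtain ⟨-, h₁, h₂⟩ := hfl (n * (p / q))
    rw [← hM, ← mul_div_assoc] at h₁ h₂
    refine ⟨⟨n, hn⟩, hn0, ?_, ?_⟩
    · change (0 : F) ≤ n * p - M * q
      linarith [(le_div_iff₀ hq').mp h₁]
    · change (n : F) * p - M * q < q
      linarith [(div_lt_iff₀ hq').mp h₂]
  · rintro ⟨n, hn0, h₁, h₂⟩
    have h₁' : (0 : F) ≤ n * p - M * q := h₁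
    have h₂' : (n : F) * p - M * q < q := h₂
    refine ⟨n, n.2, hn0, (fl_eq_of_le_of_lt_s13 hdisc hfl M.2 ?_ ?_).symm⟩
    · rw [← mul_div_assoc, le_div_iff₀ hq']
      linarith
    · rw [← mul_div_assoc, div_lt_iff₀ hq']
      linarith

theorem IsRat.exists_coprime_eq_div [IsBezout I] {α : F} (hα : IsRat I α) (hα0 : 0 < α) :
    ∃ p q : I, 0 < p ∧ 0 < q ∧ IsCoprime p q ∧ α = p / q := by
  obtain ⟨p₀, q₀, hq₀, hα₀⟩ : ∃ p₀ q₀ : I, 0 < q₀ ∧ α = p₀ / q₀ := by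
    obtain ⟨p₀, hp₀, q₀, hq₀, hne, hα⟩ := hα
    rcases hne.lt_or_gt with h | h
    · refine ⟨-⟨p₀, hp₀⟩, -⟨q₀, hq₀⟩, neg_pos.mpr h, ?_⟩
      push_cast
      rw [hα, neg_div_neg_eq]
    · exact ⟨⟨p₀, hp₀⟩, ⟨q₀, hq₀⟩, h, hα⟩
  obtain ⟨d, hd, ⟨q, rfl⟩, ⟨p, rfl⟩, u, v, huv⟩ := IsBezout.exists_pos_gcd p₀ hq₀.ne'
  have hq : 0 < q := pos_of_mul_pos_right hq₀ hd.le
  have hd' : (0 : F) < d := hd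
  have hq' : (0 : F) < q := hq
  have hqp : IsCoprime q p := ⟨u, v, mul_left_cancel₀ hd.ne' (by linear_combination huv)⟩
  have hα' : α = p / q := by
    rw [hα₀]; push_cast; exact mul_div_mul_left _ _ hd'.ne'
  refine ⟨p, q, ?_, hq, hqp.symm, hα'⟩
  have : (0 : F) < p := by
    rw [show (p : F) = α * q by rw [hα']; field_simp]
    exact mul_pos hα0 hq'
  exact_mod_cast this

end IntegerPart

theorem stmt_13 {F : Type*} [Field F] [LinearOrder F] [IsStrictOrderedRing F] (I : Subring F) (fl : F → F)
    (hdisc : ∀ x ∈ I, ¬(0 < x ∧ x < 1))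
    (hfl : ∀ x : F, fl x ∈ I ∧ fl x ≤ x ∧ x < fl x + 1)
    (hBez : IsBezoutIP I)
    (ρ σ : F) (hρ1 : 1 < ρ) (hσ1 : 1 < σ)
    (hρrat : IsRat I ρ) (hσrat : IsRat I σ)
    (hsub : Nset I fl ρ ⊆ Nset I fl σ) :
    ∃ a ∈ I, ∃ b ∈ I, 0 ≤ a ∧ 0 ≤ b ∧ a * ρ⁻¹ + b * (1 - σ⁻¹) = 1 := by
  have := isBezout_of_isBezoutIP hBez
  obtain ⟨p, q, hp, hq, hpq, rfl⟩ := hρrat.exists_coprime_eq_div (zero_lt_one.trans hρ1)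
  obtain ⟨s, t, hs, ht, hst, rfl⟩ := hσrat.exists_coprime_eq_div (zero_lt_one.trans hσ1)
  have ht' : (0 : F) < t := ht
  have hts : t < s := by
    have := (one_lt_div ht').mp hσ1
    exact_mod_cast this
  obtain ⟨A, B, hA, hB, hAB⟩ := exists_nonneg_of_isBeattyValue_subset
    (Subring.one_le_of_pos hdisc) (exists_sub_mul_lt_of_fl hfl) hp hq ht hts hpq hst
    fun M hM ↦ (mem_Nset_div_iff hdisc hfl ht M).mp
      (hsub ((mem_Nset_div_iff hdisc hfl hq M).mpr hM))
  refine ⟨A, A.2, B, B.2, by exact_mod_cast hA, by exact_mod_cast hB, ?_⟩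
  have hAB' : (A : F) * q * s + B * (s - t) * p = p * s := by exact_mod_cast hAB
  have hp' : (0 : F) < p := hp
  have hs' : (0 : F) < s := hs
  rw [inv_div, inv_div]
  field_simp
  linear_combination hAB'
end

section
/- Let F be a linearly ordered field with integer part I and let σ, ρ ∈ F with 1 ≤ σ < ρ be such that N_σ = N_ρ. Then ρ − σ is infinitesimal. -/
namespace IntegerPart

variable {F : Type*} [Field F] [LinearOrder F] [IsStrictOrderedRing F] {I : Subring F}
  {fl : F → F}

theorem floor_lt_floor_of_add_one_le (hfl : ∀ x : F, fl x ∈ I ∧ fl x ≤ x ∧ x < fl x + 1)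
    {x y : F} (hxy : x + 1 ≤ y) : fl x < fl y := by
  linarith [(hfl x).2.1, (hfl y).2.2]

theorem floor_mono (hdisc : ∀ x ∈ I, ¬(0 < x ∧ x < 1))
    (hfl : ∀ x : F, fl x ∈ I ∧ fl x ≤ x ∧ x < fl x + 1) : Monotone fl := by
  intro x y hxy
  by_contra! h
  have := add_one_le_of_lt hdisc (hfl y).1 (hfl x).1 h
  linarith [(hfl x).2.1, (hfl y).2.2]

theorem abs_sub_lt_one_of_floor_eq (hfl : ∀ x : F, fl x ∈ I ∧ fl x ≤ x ∧ x < fl x + 1)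
    {x y : F} (h : fl x = fl y) : |x - y| < 1 := by
  obtain ⟨-, hx, hx'⟩ := hfl x
  obtain ⟨-, hy, hy'⟩ := hfl y
  rw [abs_sub_lt_iff]
  constructor <;> linarith

theorem le_of_floor_mul_eq (hdisc : ∀ x ∈ I, ¬(0 < x ∧ x < 1))
    (hfl : ∀ x : F, fl x ∈ I ∧ fl x ≤ x ∧ x < fl x + 1) {σ ρ n m : F} (hσ : 1 ≤ σ)
    (hσρ : σ ≤ ρ) (hn : n ∈ I) (hn0 : 0 ≤ n) (hm : m ∈ I)
    (h : fl (n * σ) = fl (m * ρ)) : m ≤ n := by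
  by_contra! hnm
  have hnm' := add_one_le_of_lt hdisc hn hm hnm
  have : n * σ + 1 ≤ m * ρ :=
    calc n * σ + 1 ≤ (n + 1) * σ := by linarith
      _ ≤ m * σ := by gcongr
      _ ≤ m * ρ := by gcongr; linarith
  exact (floor_lt_floor_of_add_one_le hfl this).ne h

theorem floor_natCast_mul_eq_of_Nset_subset (hdisc : ∀ x ∈ I, ¬(0 < x ∧ x < 1))
    (hfl : ∀ x : F, fl x ∈ I ∧ fl x ≤ x ∧ x < fl x + 1) {σ ρ : F} (hσ : 1 ≤ σ)
    (hσρ : σ ≤ ρ) (hsub : Nset I fl σ ⊆ Nset I fl ρ) (n : ℕ) :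
    fl (n * σ) = fl (n * ρ) := by
  have hex (k : ℕ) : ∃ m, m ∈ I ∧ 0 ≤ m ∧ fl (k * σ) = fl (m * ρ) :=
    hsub ⟨k, natCast_mem I k, k.cast_nonneg, rfl⟩
  choose m hmI hm0 hm using hex
  have hρ : 0 < ρ := by linarith
  have hstrict (k : ℕ) : m k < m (k + 1) := by
    have hlt : fl (k * σ) < fl ((k + 1 : ℕ) * σ) :=
      floor_lt_floor_of_add_one_le hfl (by push_cast; linarith)
    rw [hm, hm] at hlt
    exact lt_of_mul_lt_mul_right ((floor_mono hdisc hfl).reflect_lt hlt) hρ.le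
  have hlower (k : ℕ) : (k : F) ≤ m k := by
    induction k with
    | zero => simpa using hm0 0
    | succ k ih =>
      push_cast
      linarith [add_one_le_of_lt hdisc (hmI k) (hmI (k + 1)) (hstrict k)]
  have hupper : m n ≤ n :=
    le_of_floor_mul_eq hdisc hfl hσ hσρ (natCast_mem I n) n.cast_nonneg (hmI n) (hm n)
  rw [hm n, le_antisymm hupper (hlower n)]

end IntegerPart

open IntegerPart in
theorem stmt_14 {F : Type*} [Field F] [LinearOrder F] [IsStrictOrderedRing F] (I : Subring F) (fl : F → F)
    (hdisc : ∀ x ∈ I, ¬(0 < x ∧ x < 1))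
    (hfl : ∀ x : F, fl x ∈ I ∧ fl x ≤ x ∧ x < fl x + 1)
    (σ ρ : F) (hσ1 : 1 ≤ σ) (hσρ : σ < ρ)
    (heq : Nset I fl σ = Nset I fl ρ) :
    ∀ n : ℕ, (n : F) * |ρ - σ| < 1 := by
  intro n
  have h := floor_natCast_mul_eq_of_Nset_subset hdisc hfl hσ1 hσρ.le heq.subset n
  calc (n : F) * |ρ - σ| = |n * ρ - n * σ| := by
        rw [← mul_sub, abs_mul, Nat.abs_cast]
    _ < 1 := abs_sub_lt_one_of_floor_eq hfl h.symm
end
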